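/- arXiv:2310.05537 — 9 statements merged into one kernel-verified Lean document; each statement's English description precedes it below -/
import Mathlib

section
/- Let B(X) = ∑_{l≥0} b_l X^l be the formal power series over ℝ whose coefficients are the sequence (b_l). Then B satisfies the quadratic identity b·X·B(X)² − B(X) + n = 0 in the ring of formal power series ℝ⟦X⟧. -/
/-- The generating function `B(X) = ∑ b_l X^l` of the sequence counting
binary expression trees satisfies `b·X·B(X)² − B(X) + n = 0` in `ℝ⟦X⟧`. -/
theorem stmt_0 (b k n : ℕ) (hb : 0 < b) (hk : 0 < k) (hn : 0 < n)
    (bs : ℕ → ℝ) (hbs0 : bs 0 = n)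
    (hbsrec : ∀ l : ℕ, bs (l + 1) = b * ∑ i ∈ Finset.range (l + 1), bs i * bs (l - i)) :
    PowerSeries.C (b : ℝ) * PowerSeries.X * (PowerSeries.mk bs) ^ 2
      - PowerSeries.mk bs + PowerSeries.C (n : ℝ) = 0 := by
  ext d
  rcases d with _ | l
  · simp [hbs0]
  · rw [map_zero, map_add, map_sub, PowerSeries.coeff_mk,
      PowerSeries.coeff_succ_C, mul_assoc, PowerSeries.coeff_C_mul,
      PowerSeries.coeff_succ_X_mul, sq, PowerSeries.coeff_mul]
    rw [Finset.Nat.sum_antidiagonal_eq_sum_range_succ_mk]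
    simp only [PowerSeries.coeff_mk]
    rw [hbsrec l]
    ring
end

section
/- For every real number z with 0 < z < 1/(4bn), the series ∑_{l≥0} b_l z^l converges and its sum equals (1 − √(1 − 4bnz))/(2bz). -/
open Finset

/-- Partial convolution sums of a nonneg sequence are bounded by the square of partial sums. -/
lemma conv_le_sq (a : ℕ → ℝ) (ha : ∀ i, 0 ≤ a i) (N : ℕ) :
    ∑ l ∈ range N, ∑ i ∈ range (l + 1), a i * a (l - i) ≤ (∑ l ∈ range N, a l) ^ 2 := by
  have h1 : ∑ l ∈ range N, ∑ i ∈ range (l + 1), a i * a (l - i)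
      = ∑ p ∈ (range N ×ˢ range N).filter (fun p => p.1 + p.2 < N), a p.1 * a p.2 := by
    rw [Finset.sum_sigma']
    refine Finset.sum_nbij' (fun p => (p.2, p.1 - p.2)) (fun q => ⟨q.1 + q.2, q.1⟩) ?_ ?_ ?_ ?_ ?_
    · rintro ⟨l, i⟩ hp
      simp only [Finset.mem_sigma, Finset.mem_range] at hp
      simp only [Finset.mem_filter, Finset.mem_product, Finset.mem_range]
      omega
    · rintro ⟨i, j⟩ hq
      simp only [Finset.mem_filter, Finset.mem_product, Finset.mem_range] at hq
      simp only [Finset.mem_sigma, Finset.mem_range]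
      omega
    · rintro ⟨l, i⟩ hp
      simp only [Finset.mem_sigma, Finset.mem_range] at hp
      simp only [Sigma.mk.inj_iff]
      constructor
      · omega
      · exact heq_of_eq rfl
    · rintro ⟨i, j⟩ hq
      have : i + j - i = j := by omega
      simp [this]
    · rintro ⟨l, i⟩ hp
      rfl
  rw [h1, sq, Finset.sum_mul_sum, ← Finset.sum_product']
  exact Finset.sum_le_sum_of_subset_of_nonneg (Finset.filter_subset _ _)
    (fun p _ _ => mul_nonneg (ha p.1) (ha p.2))

/-- For `0 < z < 1/(4bn)`, `∑ b_l z^l` converges with sum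
`(1 − √(1 − 4bnz))/(2bz)`. -/
theorem stmt_1 (b k n : ℕ) (hb : 0 < b) (hk : 0 < k) (hn : 0 < n)
    (bs : ℕ → ℝ) (hbs0 : bs 0 = n)
    (hbsrec : ∀ l : ℕ, bs (l + 1) = b * ∑ i ∈ Finset.range (l + 1), bs i * bs (l - i))
    (z : ℝ) (hz0 : 0 < z) (hz1 : z < 1 / (4 * b * n)) :
    HasSum (fun l : ℕ => bs l * z ^ l)
      ((1 - Real.sqrt (1 - 4 * b * n * z)) / (2 * b * z)) := by
  have hB : (0:ℝ) < b := by exact_mod_cast hb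
  have hN : (0:ℝ) < n := by exact_mod_cast hn
  have hbn : (0:ℝ) < 4 * b * n := by positivity
  have hD : 0 < 1 - 4 * (b:ℝ) * n * z := by
    have h := (lt_div_iff₀ hbn).mp hz1
    nlinarith
  have hbz : 0 < (b:ℝ) * z := mul_pos hB hz0
  set s : ℝ := Real.sqrt (1 - 4 * b * n * z) with hs_def
  have hs0 : 0 ≤ s := Real.sqrt_nonneg _
  have hs2 : s ^ 2 = 1 - 4 * b * n * z := Real.sq_sqrt hD.le
  have hs_pos : 0 < s := Real.sqrt_pos.mpr hD
  set r : ℝ := (1 - s) / (2 * b * z) with hr_def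
  have h2bz : (2:ℝ) * b * z ≠ 0 := by positivity
  have hr_eq : (n:ℝ) + b * z * r ^ 2 = r := by
    rw [hr_def]
    field_simp
    nlinarith [hs2]
  have hs_le1 : s ≤ 1 := by nlinarith [hs2]
  have hr_nonneg : 0 ≤ r := div_nonneg (by linarith) (by positivity)
  set a : ℕ → ℝ := fun l => bs l * z ^ l with ha_def
  have hbs_nonneg : ∀ l, 0 ≤ bs l := by
    intro l
    induction l using Nat.strong_induction_on with
    | _ l ih =>
      match l with
      | 0 => rw [hbs0]; positivity
      | Nat.succ m =>
        rw [hbsrec m]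
        apply mul_nonneg hB.le
        apply Finset.sum_nonneg
        intro i hi
        simp only [Finset.mem_range] at hi
        exact mul_nonneg (ih i (by omega)) (ih (m - i) (by omega))
  have ha_nonneg : ∀ l, 0 ≤ a l := fun l =>
    mul_nonneg (hbs_nonneg l) (pow_nonneg hz0.le l)
  have ha0 : a 0 = n := by simp [ha_def, hbs0]
  have ha_succ : ∀ l, a (l + 1) = b * z * ∑ i ∈ range (l + 1), a i * a (l - i) := by
    intro l
    have h2 : ∑ i ∈ range (l + 1), a i * a (l - i)
        = (∑ i ∈ range (l + 1), bs i * bs (l - i)) * z ^ l := by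
      rw [Finset.sum_mul]
      apply Finset.sum_congr rfl
      intro i hi
      have hil : i ≤ l := Finset.mem_range_succ_iff.mp hi
      simp only [ha_def]
      rw [show z ^ l = z ^ i * z ^ (l - i) by rw [← pow_add]; congr 1; omega]
      ring
    simp only [ha_def]
    rw [hbsrec l, h2, pow_succ]
    ring
  have hT : ∀ N, ∑ l ∈ range N, a l ≤ r := by
    intro N
    induction N with
    | zero => simpa using hr_nonneg
    | succ N ih =>
      have hTnn : 0 ≤ ∑ l ∈ range N, a l := Finset.sum_nonneg fun i _ => ha_nonneg i
      rw [Finset.sum_range_succ']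
      have hstep : ∑ l ∈ range N, a (l + 1) ≤ b * z * r ^ 2 := by
        calc ∑ l ∈ range N, a (l + 1)
            = b * z * ∑ l ∈ range N, ∑ i ∈ range (l + 1), a i * a (l - i) := by
              rw [Finset.mul_sum]; exact Finset.sum_congr rfl fun l _ => ha_succ l
          _ ≤ b * z * (∑ l ∈ range N, a l) ^ 2 :=
              mul_le_mul_of_nonneg_left (conv_le_sq a ha_nonneg N) hbz.le
          _ ≤ b * z * r ^ 2 :=
              mul_le_mul_of_nonneg_left (pow_le_pow_left₀ hTnn ih 2) hbz.le
      rw [ha0]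
      linarith [hr_eq]
  have hsummable : Summable a := summable_of_sum_range_le ha_nonneg hT
  set S : ℝ := ∑' l, a l with hS_def
  have hS_le : S ≤ r := Real.tsum_le_of_sum_range_le ha_nonneg hT
  have hS_nonneg : 0 ≤ S := tsum_nonneg ha_nonneg
  have hnorm : Summable fun l => ‖a l‖ := by
    have : (fun l => ‖a l‖) = a :=
      funext fun l => by rw [Real.norm_eq_abs, abs_of_nonneg (ha_nonneg l)]
    rw [this]; exact hsummable
  have hconv : S * S = ∑' l, ∑ i ∈ range (l + 1), a i * a (l - i) :=
    tsum_mul_tsum_eq_tsum_sum_range_of_summable_norm hnorm hnorm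
  have hfe : S = n + b * z * (S * S) := by
    have h1 : S = a 0 + ∑' l, a (l + 1) := hsummable.tsum_eq_zero_add
    have h2 : ∑' l, a (l + 1)
        = ∑' l, (b:ℝ) * z * ∑ i ∈ range (l + 1), a i * a (l - i) :=
      tsum_congr fun l => ha_succ l
    rw [tsum_mul_left] at h2
    calc S = a 0 + ∑' l, a (l + 1) := h1
      _ = n + b * z * (S * S) := by rw [h2, ← hconv, ha0]
  have hfact : (S - r) * ((b:ℝ) * z * (S + r) - 1) = 0 := by
    linear_combination -hfe - hr_eq
  have h2r : (b:ℝ) * z * (2 * r) = 1 - s := by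
    rw [hr_def]; field_simp
  have hlt : (b:ℝ) * z * (S + r) - 1 < 0 := by
    have hle : (b:ℝ) * z * (S + r) ≤ b * z * (2 * r) :=
      mul_le_mul_of_nonneg_left (by linarith) hbz.le
    rw [h2r] at hle
    linarith
  have hSr : S = r := by
    rcases mul_eq_zero.mp hfact with h | h
    · linarith
    · linarith
  exact hSr ▸ hsummable.hasSum
end

section
/- There exists ε > 0 such that for every real number z with 0 < z < ε, the series ∑_{l≥0} c_l z^l converges and its sum equals (1 − √(1 − 4bz·(kz·B(z) + n)))/(2bz), where B(z) = (1 − √(1 − 4bnz))/(2bz). -/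
open Finset

/-- Reindexing of the truncated Cauchy triangle. -/
lemma triangle_reindex (h : ℕ → ℕ → ℝ) (m : ℕ) :
    ∑ l ∈ range m, ∑ i ∈ range (l + 1), h i (l - i)
      = ∑ i ∈ range m, ∑ j ∈ range (m - i), h i j := by
  induction m with
  | zero => simp
  | succ m ih =>
    rw [Finset.sum_range_succ, ih]
    rw [Finset.sum_range_succ (fun i => ∑ j ∈ range (m + 1 - i), h i j)]
    have h1 : ∀ i ∈ range m, ∑ j ∈ range (m + 1 - i), h i j
        = ∑ j ∈ range (m - i), h i j + h i (m - i) := by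
      intro i hi
      have him : i ≤ m := le_of_lt (mem_range.mp hi)
      rw [show m + 1 - i = (m - i) + 1 by omega, Finset.sum_range_succ]
    rw [Finset.sum_congr rfl h1, Finset.sum_add_distrib]
    simp [Finset.sum_range_succ]
    ring

lemma cauchy_partial_le (g : ℕ → ℝ) (hg : ∀ i, 0 ≤ g i) (m : ℕ) :
    ∑ l ∈ range m, ∑ i ∈ range (l + 1), g i * g (l - i)
      ≤ (∑ i ∈ range m, g i) ^ 2 := by
  rw [triangle_reindex (fun i j => g i * g j) m, sq, Finset.sum_mul_sum]
  refine Finset.sum_le_sum fun i hi => ?_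
  refine Finset.sum_le_sum_of_subset_of_nonneg ?_ (fun j _ _ => mul_nonneg (hg i) (hg j))
  exact Finset.range_subset_range.mpr (Nat.sub_le m i)

/-- Main generating-function lemma: if `a` satisfies the quadratic recurrence
`a (l+1) = f l + b * ∑ a i * a (l-i)`, then `∑ a l * z^l` has the closed form. -/
lemma key_lemma (b z : ℝ) (hb : 0 < b) (hz : 0 < z) (a f : ℕ → ℝ)
    (ha0 : 0 ≤ a 0) (hf : ∀ l, 0 ≤ f l)
    (hrec : ∀ l, a (l + 1) = f l + b * ∑ i ∈ range (l + 1), a i * a (l - i))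
    (G : ℝ) (hG : HasSum (fun l => f l * z ^ (l + 1)) G)
    (hdisc : 0 ≤ 1 - 4 * b * z * (a 0 + G)) :
    HasSum (fun l => a l * z ^ l)
      ((1 - Real.sqrt (1 - 4 * b * z * (a 0 + G))) / (2 * b * z)) := by
  -- nonnegativity of `a`
  have ha : ∀ l, 0 ≤ a l := by
    intro l
    induction l using Nat.strong_induction_on with
    | _ l ih =>
      match l with
      | 0 => exact ha0
      | Nat.succ l =>
        rw [hrec l]
        refine add_nonneg (hf l) (mul_nonneg hb.le (Finset.sum_nonneg fun i hi => ?_))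
        have hi' := Finset.mem_range.mp hi
        exact mul_nonneg (ih i (by omega)) (ih (l - i) (by omega))
  have hG0 : 0 ≤ G := hasSum_le (fun l => mul_nonneg (hf l) (pow_nonneg hz.le _))
    hasSum_zero hG
  set F : ℝ := a 0 + G with hF
  have hF0 : 0 ≤ F := add_nonneg ha0 hG0
  set s : ℝ := Real.sqrt (1 - 4 * b * z * F) with hs
  have hs2 : s ^ 2 = 1 - 4 * b * z * F := Real.sq_sqrt hdisc
  have hs0 : 0 ≤ s := Real.sqrt_nonneg _
  have hs1 : s ≤ 1 := by
    rw [hs]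
    refine Real.sqrt_le_one.mpr ?_
    nlinarith [mul_pos hb hz]
  set r : ℝ := (1 - s) / (2 * b * z) with hr
  have hbz : 0 < b * z := mul_pos hb hz
  have hrq : r = F + b * z * r ^ 2 := by
    rw [hr]
    field_simp
    nlinarith [hs2]
  have hr0 : 0 ≤ r := by
    rw [hr]
    apply div_nonneg (by linarith) (by linarith)
  set g : ℕ → ℝ := fun l => a l * z ^ l with hgdef
  have hg0 : ∀ l, 0 ≤ g l := fun l => mul_nonneg (ha l) (pow_nonneg hz.le l)
  -- the key recurrence in terms of g
  have hgrec : ∀ l, g (l + 1)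
      = f l * z ^ (l + 1) + (b * z) * ∑ i ∈ range (l + 1), g i * g (l - i) := by
    intro l
    have : ∀ i ∈ range (l + 1), g i * g (l - i) = a i * a (l - i) * z ^ l := by
      intro i hi
      have hil : i ≤ l := Nat.lt_succ_iff.mp (mem_range.mp hi)
      simp only [hgdef]
      have hzp : z ^ i * z ^ (l - i) = z ^ l := by
        rw [← pow_add, Nat.add_sub_cancel' hil]
      calc a i * z ^ i * (a (l - i) * z ^ (l - i))
          = a i * a (l - i) * (z ^ i * z ^ (l - i)) := by ring
        _ = a i * a (l - i) * z ^ l := by rw [hzp]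
    rw [Finset.sum_congr rfl this, ← Finset.sum_mul]
    simp only [hgdef, hrec l]
    rw [pow_succ]
    ring
  -- partial sums of g are bounded by r
  have hpart : ∀ m, ∑ l ∈ range m, g l ≤ r := by
    intro m
    induction m with
    | zero => simpa using hr0
    | succ m ih =>
      have hpnn : 0 ≤ ∑ l ∈ range m, g l := Finset.sum_nonneg fun l _ => hg0 l
      rw [Finset.sum_range_succ']
      have e1 : ∑ l ∈ range m, g (l + 1)
          = ∑ l ∈ range m, f l * z ^ (l + 1)
            + (b * z) * ∑ l ∈ range m, ∑ i ∈ range (l + 1), g i * g (l - i) := by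
        rw [Finset.sum_congr rfl fun l _ => hgrec l, Finset.sum_add_distrib, Finset.mul_sum]
      have e2 : ∑ l ∈ range m, f l * z ^ (l + 1) ≤ G :=
        sum_le_hasSum _ (fun l _ => mul_nonneg (hf l) (pow_nonneg hz.le _)) hG
      have e3 : ∑ l ∈ range m, ∑ i ∈ range (l + 1), g i * g (l - i)
          ≤ (∑ l ∈ range m, g l) ^ 2 := cauchy_partial_le g hg0 m
      have e4 : (∑ l ∈ range m, g l) ^ 2 ≤ r ^ 2 := by nlinarith
      have : g 0 = a 0 := by simp [hgdef]
      rw [e1, this]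
      nlinarith [hrq]
  -- summability
  have hsum : Summable g := summable_of_sum_range_le hg0 hpart
  set S : ℝ := ∑' l, g l with hS
  have hSr : S ≤ r := Summable.tsum_le_of_sum_range_le hsum hpart
  have hS0 : 0 ≤ S := tsum_nonneg hg0
  -- Cauchy product: S^2 = ∑' l, ∑ i ∈ range (l+1), g i * g (l-i)
  have hnorm : Summable fun l => ‖g l‖ := by
    refine hsum.congr fun l => ?_
    rw [Real.norm_of_nonneg (hg0 l)]
  have hcauchy : HasSum (fun l => ∑ i ∈ range (l + 1), g i * g (l - i)) (S * S) :=
    hasSum_sum_range_mul_of_summable_norm hnorm hnorm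
  -- functional equation S = F + b z S^2
  have hfun : S = F + b * z * S ^ 2 := by
    have h1 : S = g 0 + ∑' l, g (l + 1) := Summable.tsum_eq_zero_add hsum
    have h2 : HasSum (fun l => f l * z ^ (l + 1) + (b * z) * ∑ i ∈ range (l + 1), g i * g (l - i))
        (G + (b * z) * (S * S)) := hG.add (hcauchy.mul_left (b * z))
    have h3 : ∑' l, g (l + 1) = G + (b * z) * (S * S) := by
      rw [tsum_congr fun l => hgrec l]
      exact h2.tsum_eq
    have h4 : g 0 + (G + b * z * (S * S)) = F + b * z * S ^ 2 := by
      simp only [hgdef, pow_zero, mul_one]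
      rw [hF]
      ring
    conv_lhs => rw [h1, h3]
    exact h4
  -- branch selection: S = r
  have hfactor : (S - r) * (b * z * (S + r) - 1) = 0 := by nlinarith [hfun, hrq]
  have hrhalf : 2 * (b * z) * r ≤ 1 := by
    have he : 2 * (b * z) * r = 1 - s := by
      rw [hr]; field_simp
    rw [he]; linarith
  have hSeq : S = r := by
    rcases mul_eq_zero.mp hfactor with h | h
    · linarith
    · nlinarith
  have := hsum.hasSum
  rw [← hS, hSeq, hr] at this
  exact this

set_option maxHeartbeats 1000000 in
/-- There is `ε > 0` such that for `0 < z < ε`, `∑ c_l z^l` converges with sum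
`(1 − √(1 − 4bz(kzB(z)+n)))/(2bz)` where `B(z) = (1 − √(1 − 4bnz))/(2bz)`. -/
theorem stmt_3 (b k n : ℕ) (hb : 0 < b) (hk : 0 < k) (hn : 0 < n)
    (bs cs : ℕ → ℝ) (hbs0 : bs 0 = n)
    (hbsrec : ∀ l : ℕ, bs (l + 1) = b * ∑ i ∈ Finset.range (l + 1), bs i * bs (l - i))
    (hcs0 : cs 0 = n)
    (hcsrec : ∀ l : ℕ, cs (l + 1)
      = k * bs l + b * ∑ i ∈ Finset.range (l + 1), cs i * cs (l - i)) :
    ∃ ε : ℝ, 0 < ε ∧ ∀ z : ℝ, 0 < z → z < ε →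
      HasSum (fun l : ℕ => cs l * z ^ l)
        ((1 - Real.sqrt (1 - 4 * b * z *
            (k * z * ((1 - Real.sqrt (1 - 4 * b * n * z)) / (2 * b * z)) + n)))
          / (2 * b * z)) := by
  have hb' : (1 : ℝ) ≤ b := by exact_mod_cast hb
  have hk' : (1 : ℝ) ≤ k := by exact_mod_cast hk
  have hn' : (1 : ℝ) ≤ n := by exact_mod_cast hn
  refine ⟨1 / (8 * b * n * (k + 1)), by positivity, fun z hz hzε => ?_⟩
  have hbz : 0 < (b : ℝ) * z := mul_pos (by linarith) hz
  have hεb : 8 * (b : ℝ) * n * (k + 1) * z < 1 := by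
    have h := (lt_div_iff₀ (show (0:ℝ) < 8 * (b : ℝ) * n * (k + 1) by positivity)).mp hzε
    nlinarith [h]
  have hbn1 : (1 : ℝ) ≤ (b : ℝ) * n := by
    nlinarith [mul_le_mul hb' hn' zero_le_one (by linarith : (0:ℝ) ≤ (b : ℝ))]
  have hbnk : (1 : ℝ) ≤ (b : ℝ) * n * ((k : ℝ) + 1) := by
    nlinarith [mul_le_mul hbn1 (show (1:ℝ) ≤ (k : ℝ) + 1 by linarith) zero_le_one
      (by linarith : (0:ℝ) ≤ (b : ℝ) * n)]
  have hz8 : z < 1 / 8 := by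
    nlinarith [mul_le_mul_of_nonneg_right hbnk hz.le]
  -- apply key lemma to bs
  have hdisc1 : 0 ≤ 1 - 4 * (b : ℝ) * z * ((bs 0) + 0) := by
    rw [hbs0]
    nlinarith [show (0:ℝ) < (b:ℝ) * n * z by positivity,
      show (0:ℝ) < (b:ℝ) * k * n * z by positivity]
  have hB : HasSum (fun l => bs l * z ^ l)
      ((1 - Real.sqrt (1 - 4 * b * z * ((bs 0) + 0))) / (2 * b * z)) := by
    refine key_lemma b z (by linarith) hz bs (fun _ => 0) (by rw [hbs0]; positivity)
      (fun _ => le_refl 0) (fun l => by rw [hbsrec l]; simp) 0 (by simpa using hasSum_zero) hdisc1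
  set rB : ℝ := (1 - Real.sqrt (1 - 4 * b * z * ((bs 0) + 0))) / (2 * b * z) with hrB
  -- bound rB ≤ 2n and rB ≥ 0
  have hargeq : 1 - 4 * (b : ℝ) * z * ((bs 0) + 0) = 1 - 4 * b * n * z := by
    rw [hbs0]; ring
  have hsB2 : (Real.sqrt (1 - 4 * (b : ℝ) * z * ((bs 0) + 0))) ^ 2
      = 1 - 4 * b * n * z := by
    rw [Real.sq_sqrt hdisc1, hargeq]
  have hsB0 : 0 ≤ Real.sqrt (1 - 4 * (b : ℝ) * z * ((bs 0) + 0)) := Real.sqrt_nonneg _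
  have hsB1 : Real.sqrt (1 - 4 * (b : ℝ) * z * ((bs 0) + 0)) ≤ 1 := by
    refine Real.sqrt_le_one.mpr ?_
    rw [hargeq]
    nlinarith [show (0:ℝ) < (b:ℝ) * n * z by positivity]
  have hrB0 : 0 ≤ rB := by
    rw [hrB]; apply div_nonneg (by linarith) (by linarith)
  have hrB2n : rB ≤ 2 * n := by
    rw [hrB, div_le_iff₀ (by linarith)]
    nlinarith [hsB2, hsB0, hsB1, mul_nonneg hsB0 (by linarith : 0 ≤ 1 - Real.sqrt (1 - 4 * (b : ℝ) * z * ((bs 0) + 0)))]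
  -- apply key lemma to cs
  have hGc : HasSum (fun l => ((k : ℝ) * bs l) * z ^ (l + 1)) ((k : ℝ) * z * rB) := by
    have h := hB.mul_left ((k : ℝ) * z)
    have e : (fun l => ((k : ℝ) * bs l) * z ^ (l + 1))
        = fun l => ((k : ℝ) * z) * (bs l * z ^ l) := by
      funext l; rw [pow_succ]; ring
    rw [e]
    exact h
  have hdisc2 : 0 ≤ 1 - 4 * (b : ℝ) * z * ((cs 0) + (k : ℝ) * z * rB) := by
    rw [hcs0]
    have h1 : 4 * (b : ℝ) * z * ((n : ℝ) + (k : ℝ) * z * rB)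
        ≤ 4 * b * n * z + 8 * b * k * n * z * z := by
      nlinarith [mul_le_mul_of_nonneg_left hrB2n
        (show (0:ℝ) ≤ 4 * (b : ℝ) * k * z * z by positivity)]
    nlinarith [h1, hεb, mul_lt_mul_of_pos_left hz8
        (show (0:ℝ) < 8 * (b : ℝ) * k * n * z by positivity),
      show (0:ℝ) < (b:ℝ) * n * z by positivity,
      show (0:ℝ) < (b:ℝ) * k * n * z by positivity]
  have hC : HasSum (fun l => cs l * z ^ l)
      ((1 - Real.sqrt (1 - 4 * b * z * ((cs 0) + (k : ℝ) * z * rB))) / (2 * b * z)) := by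
    refine key_lemma b z (by linarith) hz cs (fun l => (k : ℝ) * bs l)
      (by rw [hcs0]; positivity) ?_ (fun l => hcsrec l) ((k : ℝ) * z * rB) hGc hdisc2
    intro l
    have hbsnn : 0 ≤ bs l := by
      induction l using Nat.strong_induction_on with
      | _ l ih =>
        match l with
        | 0 => rw [hbs0]; positivity
        | Nat.succ l =>
          rw [hbsrec l]
          refine mul_nonneg (by positivity) (Finset.sum_nonneg fun i hi => ?_)
          have hi' := Finset.mem_range.mp hi
          exact mul_nonneg (ih i (by omega)) (ih (l - i) (by omega))
    positivity
  convert hC using 4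
  rw [hcs0, hrB, hargeq]
  ring
end

section
/- Let D(X) = ∑_{l≥0} d_l X^l be the formal power series over ℝ whose coefficients are the sequence (d_l). Then D satisfies the quadratic identity b·X·D(X)² + (k·X − 1)·D(X) + n = 0 in the ring of formal power series ℝ⟦X⟧. -/
/-- The generating function `D(X)` of all unary-binary trees satisfies
`b·X·D(X)² + (k·X − 1)·D(X) + n = 0` in `ℝ⟦X⟧`. -/
theorem stmt_4 (b k n : ℕ) (hb : 0 < b) (hk : 0 < k) (hn : 0 < n)
    (ds : ℕ → ℝ) (hds0 : ds 0 = n)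
    (hdsrec : ∀ l : ℕ, ds (l + 1)
      = k * ds l + b * ∑ i ∈ Finset.range (l + 1), ds i * ds (l - i)) :
    PowerSeries.C (b : ℝ) * PowerSeries.X * (PowerSeries.mk ds) ^ 2
      + (PowerSeries.C (k : ℝ) * PowerSeries.X - 1) * PowerSeries.mk ds
      + PowerSeries.C (n : ℝ) = 0 := by
  ext m
  cases m with
  | zero =>
    simp [hds0]
  | succ l =>
    have h2 : (PowerSeries.coeff l) ((PowerSeries.mk ds) ^ 2)
        = ∑ i ∈ Finset.range (l + 1), ds i * ds (l - i) := by
      rw [sq, PowerSeries.coeff_mul,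
        Finset.Nat.sum_antidiagonal_eq_sum_range_succ_mk]
      simp
    rw [mul_assoc, map_add, map_add, PowerSeries.coeff_C_mul,
      PowerSeries.coeff_succ_X_mul, h2, sub_mul, one_mul, map_sub,
      mul_comm (PowerSeries.C (k:ℝ)) PowerSeries.X]
    rw [mul_assoc, PowerSeries.coeff_succ_X_mul, PowerSeries.coeff_C_mul,
      PowerSeries.coeff_mk, PowerSeries.coeff_mk, hdsrec l, map_zero,
      PowerSeries.coeff_C]
    simp
end

section
/- For every real number z with 0 < z < r_2, the quantity k²z² − (2k + 4bn)z + 1 is nonnegative, the series ∑_{l≥0} d_l z^l converges, and its sum equals (1 − kz − √(k²z² − (2k + 4bn)z + 1))/(2bz). -/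
set_option maxHeartbeats 1000000

open Finset

lemma triangle_le_sq (a : ℕ → ℝ) (ha : ∀ i, 0 ≤ a i) (m : ℕ) :
    ∑ l ∈ Finset.range m, ∑ i ∈ Finset.range (l+1), a i * a (l - i)
      ≤ (∑ i ∈ Finset.range m, a i)^2 := by
  have h1 : ∀ l, ∑ i ∈ Finset.range (l+1), a i * a (l - i)
      = ∑ p ∈ Finset.HasAntidiagonal.antidiagonal l, a p.1 * a p.2 := by
    intro l
    rw [Finset.Nat.sum_antidiagonal_eq_sum_range_succ_mk]
  simp_rw [h1]
  rw [← Finset.sum_biUnion]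
  · rw [sq, Finset.sum_mul_sum, ← Finset.sum_product' (s := Finset.range m)
      (t := Finset.range m) (f := fun i j => a i * a j)]
    apply Finset.sum_le_sum_of_subset_of_nonneg
    · intro p hp
      simp only [Finset.mem_biUnion, Finset.mem_range, Finset.HasAntidiagonal.mem_antidiagonal] at hp
      obtain ⟨l, hl, hpl⟩ := hp
      simp only [Finset.mem_product, Finset.mem_range]
      omega
    · intro p _ _
      exact mul_nonneg (ha _) (ha _)
  · intro x hx y hy hxy
    simp only [Function.onFun, Finset.disjoint_left]
    intro p hp hp'
    simp only [Finset.HasAntidiagonal.mem_antidiagonal] at hp hp'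
    exact hxy (by omega)

/-- For `0 < z < r₂`, the discriminant `k²z² − (2k+4bn)z + 1` is nonnegative and
`∑ d_l z^l` converges with sum `(1 − kz − √(k²z² − (2k+4bn)z + 1))/(2bz)`. -/
theorem stmt_5 (b k n : ℕ) (hb : 0 < b) (hk : 0 < k) (hn : 0 < n)
    (ds : ℕ → ℝ) (hds0 : ds 0 = n)
    (hdsrec : ∀ l : ℕ, ds (l + 1)
      = k * ds l + b * ∑ i ∈ Finset.range (l + 1), ds i * ds (l - i))
    (r2 : ℝ)
    (hr2 : r2 = ((k : ℝ) + 2 * b * n - 2 * Real.sqrt (b * n * k + b ^ 2 * n ^ 2)) / k ^ 2)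
    (z : ℝ) (hz0 : 0 < z) (hz1 : z < r2) :
    0 ≤ (k : ℝ) ^ 2 * z ^ 2 - (2 * k + 4 * b * n) * z + 1 ∧
    HasSum (fun l : ℕ => ds l * z ^ l)
      ((1 - k * z - Real.sqrt ((k : ℝ) ^ 2 * z ^ 2 - (2 * k + 4 * b * n) * z + 1))
        / (2 * b * z)) := by
  have hB : (0:ℝ) < b := by exact_mod_cast hb
  have hK : (0:ℝ) < k := by exact_mod_cast hk
  have hN : (0:ℝ) < n := by exact_mod_cast hn
  set σ : ℝ := Real.sqrt (b * n * k + b ^ 2 * n ^ 2) with hσ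
  have hσ0 : 0 ≤ σ := Real.sqrt_nonneg _
  have hσ2 : σ ^ 2 = b * n * k + b ^ 2 * n ^ 2 := Real.sq_sqrt (by positivity)
  have hσBN : (b:ℝ) * n ≤ σ := by nlinarith [hσ0, hσ2]
  -- z < r2 means K² z < K + 2BN - 2σ
  have hz2 : (k:ℝ) ^ 2 * z < k + 2 * b * n - 2 * σ := by
    rw [hr2, lt_div_iff₀ (by positivity)] at hz1
    linarith [hz1]
  have hu : (0:ℝ) < k + 2 * b * n - 2 * σ - k ^ 2 * z := by linarith
  have hv : (0:ℝ) < k + 2 * b * n + 2 * σ - k ^ 2 * z := by linarith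
  set D : ℝ := (k : ℝ) ^ 2 * z ^ 2 - (2 * k + 4 * b * n) * z + 1 with hDdef
  have hD : 0 < D := by nlinarith [mul_pos hu hv, hσ2, hK]
  have hkz : (k:ℝ) * z < 1 := by nlinarith [hz2, hσBN, hK, hz0]
  set w : ℝ := Real.sqrt D with hw
  have hw0 : 0 ≤ w := Real.sqrt_nonneg _
  have hw2 : w ^ 2 = D := Real.sq_sqrt hD.le
  have hDle : D ≤ (1 - k * z) ^ 2 := by nlinarith [mul_pos (mul_pos hB hN) hz0]
  have hwlt : w ≤ 1 - k * z := by
    rw [hw]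
    calc Real.sqrt D ≤ Real.sqrt ((1 - k * z) ^ 2) := Real.sqrt_le_sqrt hDle
    _ = 1 - k * z := by rw [Real.sqrt_sq (by linarith)]
  set s : ℝ := (1 - k * z - w) / (2 * b * z) with hsdef
  have hs0 : 0 ≤ s := div_nonneg (by linarith) (by positivity)
  have hs' : s * (2 * b * z) = 1 - k * z - w := by
    rw [hsdef]; field_simp
  have hseq : (n:ℝ) + k * z * s + b * z * s ^ 2 = s := by
    have e : 2 * (b:ℝ) * z * s = 1 - k * z - w := by linear_combination hs'
    have h4 : 4 * (b:ℝ) * z * ((n:ℝ) + k * z * s + b * z * s ^ 2 - s) = 0 := by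
      linear_combination (2*(b:ℝ)*z*s + (1 - k*z - w) - 2*(1 - k*z)) * e + hw2
    have h5 : 4 * (b:ℝ) * z ≠ 0 := by positivity
    have h6 := (mul_eq_zero.mp h4).resolve_left h5
    linarith
  -- nonnegativity of ds
  have hdpos : ∀ l, 0 ≤ ds l := by
    intro l
    induction l using Nat.strong_induction_on with
    | _ l ih =>
      match l with
      | 0 => rw [hds0]; positivity
      | Nat.succ m =>
        rw [hdsrec m]
        have h1 : 0 ≤ ∑ i ∈ Finset.range (m+1), ds i * ds (m - i) :=
          Finset.sum_nonneg fun i hi => by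
            have hi' : i < m + 1 := Finset.mem_range.mp hi
            exact mul_nonneg (ih i (by omega)) (ih (m - i) (by omega))
        have := ih m (by omega)
        positivity
  set f : ℕ → ℝ := fun l => ds l * z ^ l with hfdef
  have hf0 : ∀ l, 0 ≤ f l := fun l => mul_nonneg (hdpos l) (by positivity)
  -- the key recurrence for f
  have key : ∀ l, f (l + 1) = k * z * f l
      + b * z * ∑ i ∈ Finset.range (l+1), f i * f (l - i) := by
    intro l
    have h1 : ∑ i ∈ Finset.range (l+1), f i * f (l - i)
        = (∑ i ∈ Finset.range (l+1), ds i * ds (l - i)) * z ^ l := by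
      rw [Finset.sum_mul]
      refine Finset.sum_congr rfl fun i hi => ?_
      have hi' : i ≤ l := by
        have := Finset.mem_range.mp hi; omega
      simp only [hfdef]
      have hzz : z ^ i * z ^ (l - i) = z ^ l := by
        rw [← pow_add]; congr 1; omega
      linear_combination (ds i * ds (l - i)) * hzz
    rw [h1]
    simp only [hfdef, hdsrec l]
    ring
  -- partial sums bounded by s
  have hP : ∀ m, ∑ l ∈ Finset.range m, f l ≤ s := by
    intro m
    induction m with
    | zero => simpa using hs0
    | succ m ih =>
      have hPm0 : 0 ≤ ∑ l ∈ Finset.range m, f l := Finset.sum_nonneg fun i _ => hf0 i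
      rw [Finset.sum_range_succ']
      have hf00 : f 0 = n := by simp [hfdef, hds0]
      have h2 : ∑ i ∈ Finset.range m, f (i + 1)
          = k * z * (∑ l ∈ Finset.range m, f l)
            + b * z * ∑ l ∈ Finset.range m, ∑ i ∈ Finset.range (l+1), f i * f (l - i) := by
        rw [Finset.mul_sum, Finset.mul_sum, ← Finset.sum_add_distrib]
        exact Finset.sum_congr rfl fun l _ => key l
      rw [h2, hf00]
      have h3 : ∑ l ∈ Finset.range m, ∑ i ∈ Finset.range (l+1), f i * f (l - i)
          ≤ (∑ l ∈ Finset.range m, f l) ^ 2 := triangle_le_sq f hf0 m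
      have c1 : k * z * (∑ l ∈ Finset.range m, f l) ≤ k * z * s :=
        mul_le_mul_of_nonneg_left ih (le_of_lt (mul_pos hK hz0))
      have c2 : (∑ l ∈ Finset.range m, f l) ^ 2 ≤ s ^ 2 := by
        nlinarith [ih, hPm0]
      have c3 : b * z * (∑ l ∈ Finset.range m, ∑ i ∈ Finset.range (l+1), f i * f (l - i))
          ≤ b * z * s ^ 2 :=
        mul_le_mul_of_nonneg_left (le_trans h3 c2) (le_of_lt (mul_pos hB hz0))
      linarith [hseq, c1, c3]
  have hsum : Summable f := summable_of_sum_range_le hf0 hP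
  set L : ℝ := ∑' l, f l with hLdef
  have hLle : L ≤ s := Real.tsum_le_of_sum_range_le hf0 hP
  have hnorm : Summable fun l => ‖f l‖ := by
    have : (fun l => ‖f l‖) = f := funext fun l => by
      rw [Real.norm_eq_abs, abs_of_nonneg (hf0 l)]
    rw [this]; exact hsum
  have hcauchy : L * L = ∑' l, ∑ i ∈ Finset.range (l+1), f i * f (l - i) :=
    tsum_mul_tsum_eq_tsum_sum_range_of_summable_norm hnorm hnorm
  have hQsum : Summable fun l => ∑ i ∈ Finset.range (l+1), f i * f (l - i) :=
    (summable_norm_sum_mul_range_of_summable_norm hnorm hnorm).of_norm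
  have hfix : L = n + k * z * L + b * z * (L * L) := by
    have h0 : L = f 0 + ∑' l, f (l + 1) := Summable.tsum_eq_zero_add hsum
    have h1 : ∑' l, f (l + 1)
        = ∑' l, (k * z * f l
            + b * z * ∑ i ∈ Finset.range (l+1), f i * f (l - i)) :=
      tsum_congr key
    have h2 : ∑' l, (k * z * f l
            + b * z * ∑ i ∈ Finset.range (l+1), f i * f (l - i))
        = k * z * L + b * z * (L * L) := by
      rw [Summable.tsum_add (hsum.mul_left _) (hQsum.mul_left _), tsum_mul_left, tsum_mul_left,
        hcauchy]
    have hf00 : f 0 = n := by simp [hfdef, hds0]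
    rw [h1, h2, hf00] at h0
    linarith [h0]
  have hroot : (L - s) * (b * z * (L + s) + k * z - 1) = 0 := by
    linear_combination (-1 : ℝ) * hfix - hseq
  have hLs : L = s := by
    rcases mul_eq_zero.mp hroot with h | h
    · linarith
    · have h3 : (b:ℝ) * z * (L - s) = w := by linear_combination h - hs'
      nlinarith [h3, hw0, hLle, mul_pos hB hz0]
  refine ⟨hD.le, ?_⟩
  have : HasSum f L := hsum.hasSum
  rw [hLs] at this
  exact this
end

section
/- The cubic polynomial q has three distinct real roots; that is, there exist pairwise distinct real numbers x_1, x_2, x_3 with q(x_1) = q(x_2) = q(x_3) = 0. -/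
set_option maxHeartbeats 1000000 in
/-- The cubic `q(z) = (1 − 2kz − 4bnz)² − 4k²z²(1 − 4bnz)` has three distinct
real roots. -/
theorem stmt_8 (b k n : ℕ) (hb : 0 < b) (hk : 0 < k) (hn : 0 < n) :
    ∃ x₁ x₂ x₃ : ℝ, x₁ ≠ x₂ ∧ x₁ ≠ x₃ ∧ x₂ ≠ x₃ ∧
      (1 - 2 * k * x₁ - 4 * b * n * x₁) ^ 2
        - 4 * (k : ℝ) ^ 2 * x₁ ^ 2 * (1 - 4 * b * n * x₁) = 0 ∧
      (1 - 2 * k * x₂ - 4 * b * n * x₂) ^ 2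
        - 4 * (k : ℝ) ^ 2 * x₂ ^ 2 * (1 - 4 * b * n * x₂) = 0 ∧
      (1 - 2 * k * x₃ - 4 * b * n * x₃) ^ 2
        - 4 * (k : ℝ) ^ 2 * x₃ ^ 2 * (1 - 4 * b * n * x₃) = 0 := by
  have hK : (1 : ℝ) ≤ (k : ℝ) := by exact_mod_cast hk
  have hB : (1 : ℝ) ≤ (b : ℝ) := by exact_mod_cast hb
  have hN : (1 : ℝ) ≤ (n : ℝ) := by exact_mod_cast hn
  set K : ℝ := (k : ℝ) with hKdef
  set s : ℝ := 2 * K with hsdef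
  set a : ℝ := 4 * (b : ℝ) * (n : ℝ) with hadef
  have hKpos : 0 < K := lt_of_lt_of_le one_pos hK
  have hspos : 0 < s := by positivity
  have hapos : 0 < a := by
    have : (0:ℝ) < (b:ℝ) := lt_of_lt_of_le one_pos hB
    have : (0:ℝ) < (n:ℝ) := lt_of_lt_of_le one_pos hN
    positivity
  set f : ℝ → ℝ := fun x => (1 - 2 * K * x - a * x) ^ 2
      - 4 * K ^ 2 * x ^ 2 * (1 - a * x) with hfdef
  have hcont : Continuous f := by fun_prop
  -- key evaluation points
  set p : ℝ := 1 / (s + a) with hpdef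
  set r : ℝ := 1 / a with hrdef
  set c : ℝ := 1 + 2 * (s + a) + (a ^ 2 + 2 * a * s) with hcdef
  set t : ℝ := c / (a * s ^ 2) + 1 with htdef
  have hsa : 0 < s + a := by positivity
  have hcpos : 0 < c := by positivity
  have hppos : 0 < p := by positivity
  have hrpos : 0 < r := by positivity
  have hpr : p < r := by
    rw [hpdef, hrdef]
    apply one_div_lt_one_div_of_lt hapos
    linarith
  have ht1 : (1 : ℝ) ≤ t := by
    have h : 0 ≤ c / (a * s ^ 2) := by positivity
    rw [htdef]; linarith
  have htpos : 0 < t := lt_of_lt_of_le one_pos ht1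
  have hteq : a * s ^ 2 * t = c + a * s ^ 2 := by
    rw [htdef]; field_simp
  -- values
  have hf0 : f 0 = 1 := by simp [hfdef]
  have hfp : f p < 0 := by
    have h1 : 1 - 2 * K * p - a * p = 0 := by
      rw [hpdef, hsdef]; field_simp; ring
    have h2 : 1 - a * p = s / (s + a) := by
      rw [hpdef]; field_simp; ring
    have : f p = - (4 * K ^ 2 * p ^ 2 * (s / (s + a))) := by
      simp only [hfdef]
      rw [h1, h2]; ring
    rw [this]
    have : 0 < 4 * K ^ 2 * p ^ 2 * (s / (s + a)) := by positivity
    linarith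
  have hfr : 0 < f r := by
    have h2 : 1 - a * r = 0 := by
      rw [hrdef]; field_simp; ring
    have h1 : 1 - 2 * K * r - a * r = - (s * r) := by
      have : a * r = 1 := by rw [hrdef]; field_simp
      rw [hsdef]; rw [this]; ring
    have : f r = (s * r) ^ 2 := by
      simp only [hfdef]
      rw [h1, h2]; ring
    rw [this]; positivity
  have hfneg : f (-t) < 0 := by
    have hexp : f (-t) = 1 + 2 * (s + a) * t + (a ^ 2 + 2 * a * s) * t ^ 2
        - a * s ^ 2 * t ^ 3 := by
      simp only [hfdef, hsdef]; ring
    rw [hexp]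
    have h1 : 1 + 2 * (s + a) * t + (a ^ 2 + 2 * a * s) * t ^ 2 ≤ c * t ^ 2 := by
      rw [hcdef]
      nlinarith [sq_nonneg (t - 1), ht1, hsa, hapos, hspos]
    have h2 : c * t ^ 2 < a * s ^ 2 * t ^ 3 := by
      have hc' : c < a * s ^ 2 * t := by nlinarith [hteq, hapos, hspos]
      nlinarith [sq_nonneg t, htpos, hc']
    linarith
  -- three roots by IVT
  have hmono : (-t : ℝ) ≤ 0 := by linarith
  obtain ⟨x₁, hx₁mem, hx₁⟩ : ∃ x ∈ Set.Icc (-t) (0:ℝ), f x = 0 := by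
    have := intermediate_value_Icc hmono (hcont.continuousOn)
    have h0 : (0:ℝ) ∈ Set.Icc (f (-t)) (f 0) :=
      ⟨le_of_lt hfneg, by rw [hf0]; norm_num⟩
    obtain ⟨x, hx, hfx⟩ := this h0
    exact ⟨x, hx, hfx⟩
  obtain ⟨x₂, hx₂mem, hx₂⟩ : ∃ x ∈ Set.Icc (0:ℝ) p, f x = 0 := by
    have := intermediate_value_Icc' (le_of_lt hppos) (hcont.continuousOn)
    have h0 : (0:ℝ) ∈ Set.Icc (f p) (f 0) :=
      ⟨le_of_lt hfp, by rw [hf0]; norm_num⟩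
    obtain ⟨x, hx, hfx⟩ := this h0
    exact ⟨x, hx, hfx⟩
  obtain ⟨x₃, hx₃mem, hx₃⟩ : ∃ x ∈ Set.Icc p r, f x = 0 := by
    have := intermediate_value_Icc (le_of_lt hpr) (hcont.continuousOn)
    have h0 : (0:ℝ) ∈ Set.Icc (f p) (f r) := by
      constructor <;> linarith
    obtain ⟨x, hx, hfx⟩ := this h0
    exact ⟨x, hx, hfx⟩
  have hx₁lt : x₁ < 0 := by
    rcases lt_or_eq_of_le hx₁mem.2 with h | h
    · exact h
    · exfalso; rw [h] at hx₁; rw [hf0] at hx₁; norm_num at hx₁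
  have hx₂lt : x₂ < p := by
    rcases lt_or_eq_of_le hx₂mem.2 with h | h
    · exact h
    · exfalso; rw [h] at hx₂; linarith
  have hx₃gt : p < x₃ := by
    rcases lt_or_eq_of_le hx₃mem.1 with h | h
    · exact h
    · exfalso; rw [← h] at hx₃; linarith
  refine ⟨x₁, x₂, x₃, ?_, ?_, ?_, ?_, ?_, ?_⟩
  · exact ne_of_lt (lt_of_lt_of_le hx₁lt hx₂mem.1)
  · exact ne_of_lt (by linarith [hx₂mem.1] : x₁ < x₃)
  · exact ne_of_lt (lt_trans hx₂lt hx₃gt)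
  · simpa [hfdef, hadef, hsdef, hKdef] using hx₁
  · simpa [hfdef, hadef, hsdef, hKdef] using hx₂
  · simpa [hfdef, hadef, hsdef, hKdef] using hx₃
end

section
/- The sequence of ratios d_{l+1}/d_l converges as l → ∞, and its limit equals 1/r_2. -/
open PowerSeries in
lemma aux_rec3 (b k n : ℝ) (ds : ℕ → ℝ) (hds0 : ds 0 = n)
    (hdsrec : ∀ l : ℕ, ds (l + 1)
      = k * ds l + b * ∑ i ∈ Finset.range (l + 1), ds i * ds (l - i)) :
    ∀ l : ℕ, ((l : ℝ) + 3) * ds (l + 2)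
      = (k + 2 * b * n) * (2 * (l : ℝ) + 3) * ds (l + 1) - k ^ 2 * (l : ℝ) * ds l := by
  have h1 : (mk ds : ℝ⟦X⟧) = C n + C k * (X * mk ds) + C b * (X * (mk ds * mk ds)) := by
    ext l
    cases l with
    | zero => simp [coeff_zero_eq_constantCoeff, hds0]
    | succ l =>
      rw [map_add, map_add, coeff_C_mul, coeff_C_mul, coeff_succ_X_mul, coeff_succ_X_mul,
        coeff_mk, coeff_C, coeff_mul]
      simp only [coeff_mk]
      rw [Finset.Nat.sum_antidiagonal_eq_sum_range_succ (fun x y => ds x * ds y)]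
      rw [hdsrec l]
      simp
  set F : ℝ⟦X⟧ := mk ds with hF
  set G : ℝ⟦X⟧ := d⁄dX ℝ F with hG
  have h2 : G = C k * (F + X * G)
      + C b * (F * F + X * (F * G + F * G)) := by
    rw [hG]
    nth_rewrite 1 [h1]
    simp only [map_add, Derivation.leibniz, derivative_X, derivative_C, smul_eq_mul,
      mul_zero, zero_add, add_zero, mul_one, zero_mul]
    ring
  have hODE : X * G + F = (C k * (X * (X * G)) + C k * (X * (X * G)))
      + (C b * (C n * (X * (X * G))) + C b * (C n * (X * (X * G)))
        + C b * (C n * (X * (X * G))) + C b * (C n * (X * (X * G))))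
      - C k * (C k * (X * (X * (X * G)))) + C k * (X * F)
      + (C b * (C n * (X * F)) + C b * (C n * (X * F)))
      + C n + C n * (C k * X) := by
    linear_combination (1 + C k * X + 2 * C b * X * F + 4 * C b * X ^ 2 * G) * h1
      + (-(X * (2 * C b * X * F + C k * X - 1))) * h2
  intro l
  cases l with
  | zero =>
    have r0 := hdsrec 0
    have r1 := hdsrec 1
    simp [Finset.sum_range_succ, hds0] at r0 r1
    push_cast
    nlinarith [r0, r1]
  | succ j =>
    have hc := congrArg (coeff (j + 3)) hODE
    simp only [map_add, map_sub, coeff_C_mul] at hc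
    rw [show j + 3 = (j + 2) + 1 from rfl] at hc
    simp only [coeff_succ_X_mul] at hc
    simp only [hG, coeff_derivative, hF, coeff_mk, coeff_C, coeff_X] at hc
    norm_num at hc
    push_cast
    linarith [hc]

lemma aux_pos (b k n : ℝ) (hb : 0 < b) (hk : 0 < k) (hn : 0 < n) (ds : ℕ → ℝ)
    (hds0 : ds 0 = n)
    (hdsrec : ∀ l : ℕ, ds (l + 1)
      = k * ds l + b * ∑ i ∈ Finset.range (l + 1), ds i * ds (l - i)) :
    ∀ l, 0 < ds l := by
  have key : ∀ l, ∀ i, i ≤ l → 0 < ds i := by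
    intro l
    induction l with
    | zero =>
      intro i hi
      rw [Nat.le_zero] at hi
      subst hi; rw [hds0]; exact hn
    | succ l ih =>
      intro i hi
      by_cases h : i ≤ l
      · exact ih i h
      · have : i = l + 1 := by omega
        subst this
        rw [hdsrec l]
        have hsum : 0 < ∑ i ∈ Finset.range (l + 1), ds i * ds (l - i) := by
          apply Finset.sum_pos
          · intro j hj
            rw [Finset.mem_range] at hj
            exact mul_pos (ih j (by omega)) (ih (l - j) (by omega))
          · exact ⟨0, by simp⟩
        exact add_pos (mul_pos hk (ih l le_rfl)) (mul_pos hb hsum)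
  exact fun l => key l l le_rfl

set_option maxHeartbeats 1600000 in
/-- The ratios `d_{l+1}/d_l` converge to `1/r₂`. -/
theorem stmt_13 (b k n : ℕ) (hb : 0 < b) (hk : 0 < k) (hn : 0 < n)
    (ds : ℕ → ℝ) (hds0 : ds 0 = n)
    (hdsrec : ∀ l : ℕ, ds (l + 1)
      = k * ds l + b * ∑ i ∈ Finset.range (l + 1), ds i * ds (l - i))
    (r2 : ℝ)
    (hr2 : r2 = ((k : ℝ) + 2 * b * n - 2 * Real.sqrt (b * n * k + b ^ 2 * n ^ 2)) / k ^ 2) :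
    Filter.Tendsto (fun l : ℕ => ds (l + 1) / ds l) Filter.atTop (nhds (1 / r2)) := by
  have hB : (0:ℝ) < b := by exact_mod_cast hb
  have hK : (0:ℝ) < k := by exact_mod_cast hk
  have hN : (0:ℝ) < n := by exact_mod_cast hn
  set B := (b:ℝ); set K := (k:ℝ); set N := (n:ℝ)
  have pos : ∀ l, 0 < ds l := aux_pos B K N hB hK hN ds hds0 hdsrec
  have rec3 := aux_rec3 B K N ds hds0 hdsrec
  set m : ℝ := K + 2 * B * N with hm
  have hmpos : 0 < m := by positivity
  set s : ℝ := 2 * Real.sqrt (B * N * K + B ^ 2 * N ^ 2) with hs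
  have hspos : 0 < s := by
    have h1 : (0:ℝ) < B * N * K + B ^ 2 * N ^ 2 := by positivity
    have h2 := Real.sqrt_pos.mpr h1
    rw [hs]; positivity
  have hsq := Real.sq_sqrt (show (0:ℝ) ≤ B * N * K + B ^ 2 * N ^ 2 by positivity)
  have hs2 : s ^ 2 = m ^ 2 - K ^ 2 := by
    rw [hs, hm]; linear_combination 4 * hsq
  have hsm : s < m := by nlinarith [hs2, hspos, hmpos, mul_pos hK hK]
  set L : ℝ := m + s with hL
  have hLpos : 0 < L := by positivity
  have hr2L : 1 / r2 = L := by
    rw [hr2, one_div_div, hL]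
    rw [div_eq_iff (sub_ne_zero.mpr hsm.ne')]
    linear_combination hs2
  have hAB : ∀ l, K ^ 2 * ds l ≤ m * ds (l + 1) ∧
      ds (l + 1) * ds (l + 1) ≤ ds l * ds (l + 2) := by
    intro l
    induction l with
    | zero =>
      have r0 := hdsrec 0
      simp [Finset.sum_range_succ, hds0] at r0
      have r20 := rec3 0
      norm_num at r20
      have hds2 : ds 2 = m * ds 1 := by linarith
      have hd1pos : (0:ℝ) < K * N + B * (N * N) := by positivity
      constructor
      · rw [r0, hds0, hm]
        nlinarith [mul_pos (mul_pos hB hK) (mul_pos hN hN),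
          mul_pos (mul_pos hB hB) (mul_pos hN (mul_pos hN hN))]
      · rw [hds2, hds0, r0]
        nlinarith [mul_pos hd1pos (mul_pos hB (mul_pos hN hN))]
    | succ l ih =>
      obtain ⟨ihB, ihA⟩ := ih
      have hB1 : K ^ 2 * ds (l + 1) ≤ m * ds (l + 2) := by
        nlinarith [mul_le_mul_of_nonneg_left ihA hmpos.le,
          mul_le_mul_of_nonneg_right ihB (pos (l + 1)).le, pos l]
      refine ⟨hB1, ?_⟩
      have h1 := rec3 l
      have h2 := rec3 (l + 1)
      push_cast at h2
      have key : ((l:ℝ) + 3) * ((l:ℝ) + 4) * (ds (l + 1) * ds (l + 3) - ds (l + 2) ^ 2)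
          = 3 * m * ds (l + 1) * ds (l + 2)
            - K ^ 2 * (((l:ℝ) + 1) * ((l:ℝ) + 3)) * ds (l + 1) ^ 2
            + K ^ 2 * ((l:ℝ) * ((l:ℝ) + 4)) * (ds l * ds (l + 2)) := by
        linear_combination (((l:ℝ) + 3) * ds (l + 1)) * h2 - (((l:ℝ) + 4) * ds (l + 2)) * h1
      have t1 : 0 ≤ K ^ 2 * ((l:ℝ) * ((l:ℝ) + 4)) * (ds l * ds (l + 2) - ds (l + 1) ^ 2) := by
        have hln : (0:ℝ) ≤ (l:ℝ) := Nat.cast_nonneg l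
        have h' : 0 ≤ ds l * ds (l + 2) - ds (l + 1) ^ 2 := by nlinarith [ihA]
        positivity
      have t2 : 0 ≤ 3 * ds (l + 1) * (m * ds (l + 2) - K ^ 2 * ds (l + 1)) := by
        have := pos (l + 1)
        nlinarith [hB1]
      have hpos34 : (0:ℝ) < ((l:ℝ) + 3) * ((l:ℝ) + 4) := by positivity
      nlinarith [key, t1, t2, hpos34]
  have hC : ∀ l, ds (l + 1) ≤ L * ds l := by
    intro l
    induction l with
    | zero =>
      have r0 := hdsrec 0
      simp [Finset.sum_range_succ, hds0] at r0
      rw [r0, hds0, hL, hm]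
      nlinarith [hspos, mul_pos hB (mul_pos hN hN)]
    | succ l ih =>
      have h1 := rec3 l
      have hK2 : K ^ 2 = L * (2 * m - L) := by rw [hL]; linear_combination hs2
      have h2mL : 0 ≤ 2 * m - L := by rw [hL]; linarith
      have hln : (0:ℝ) ≤ (l:ℝ) := Nat.cast_nonneg l
      have t : (2 * m - L) * (l:ℝ) * ds (l + 1) ≤ K ^ 2 * (l:ℝ) * ds l := by
        have h' : 0 ≤ (2 * m - L) * (l:ℝ) * (L * ds l - ds (l + 1)) := by
          apply mul_nonneg (mul_nonneg h2mL hln)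
          linarith [ih]
        rw [hK2]
        nlinarith [h']
      have hpos3 : (0:ℝ) < (l:ℝ) + 3 := by positivity
      have e : ((l:ℝ) + 3) * (L * ds (l + 1) - ds (l + 2))
          = ((l:ℝ) + 3) * L * ds (l + 1) - m * (2 * (l:ℝ) + 3) * ds (l + 1)
            + K ^ 2 * (l:ℝ) * ds l := by linear_combination -h1
      have e3 : ((l:ℝ) + 3) * L * ds (l + 1) - m * (2 * (l:ℝ) + 3) * ds (l + 1)
          + (2 * m - L) * (l:ℝ) * ds (l + 1) = 3 * (L - m) * ds (l + 1) := by ring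
      have hsd : 0 ≤ 3 * (L - m) * ds (l + 1) := by
        have : L - m = s := by rw [hL]; ring
        rw [this]
        exact mul_nonneg (mul_nonneg (by norm_num) hspos.le) (pos (l + 1)).le
      have hnn : 0 ≤ ((l:ℝ) + 3) * (L * ds (l + 1) - ds (l + 2)) := by linarith [e, e3, t, hsd]
      nlinarith [hnn, hpos3]
  set ρ : ℕ → ℝ := fun l => ds (l + 1) / ds l with hρ
  have hρdef : ∀ l, ρ l = ds (l + 1) / ds l := fun l => by rw [hρ]
  have hρpos : ∀ l, 0 < ρ l := fun l => by rw [hρdef l]; exact div_pos (pos (l + 1)) (pos l)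
  have hmono : Monotone ρ := by
    apply monotone_nat_of_le_succ
    intro l
    rw [hρdef l, hρdef (l + 1)]
    rw [div_le_div_iff₀ (pos l) (pos (l + 1))]
    nlinarith [(hAB l).2]
  have hbdd : ∀ l, ρ l ≤ L := by
    intro l
    rw [hρdef l, div_le_iff₀ (pos l)]
    nlinarith [hC l]
  have hbddA : BddAbove (Set.range ρ) := ⟨L, by rintro x ⟨l, rfl⟩; exact hbdd l⟩
  set A : ℝ := ⨆ l, ρ l with hA
  have htend : Filter.Tendsto ρ Filter.atTop (nhds A) := tendsto_atTop_ciSup hmono hbddA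
  have hρ1 : ρ 1 = m := by
    have r20 := rec3 0
    norm_num at r20
    have hds2 : ds 2 = m * ds 1 := by linarith
    rw [hρdef 1]
    rw [show (1:ℕ) + 1 = 2 from rfl, hds2, mul_div_assoc, div_self (pos 1).ne', mul_one]
  have hAm : m ≤ A := by rw [← hρ1]; exact le_ciSup hbddA 1
  have hAL : A ≤ L := ciSup_le hbdd
  have hApos : 0 < A := lt_of_lt_of_le hmpos hAm
  have hρrec : ∀ l : ℕ, ds (l + 2) / ds (l + 1)
      = m * ((2 * (l:ℝ) + 3) / ((l:ℝ) + 3))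
        - K ^ 2 * (((l:ℝ) / ((l:ℝ) + 3)) * (ds l / ds (l + 1))) := by
    intro l
    have hpos3 : ((l:ℝ) + 3) ≠ 0 := by positivity
    have hdd : ds (l + 2) = (m * (2 * (l:ℝ) + 3) * ds (l + 1) - K ^ 2 * (l:ℝ) * ds l)
        / ((l:ℝ) + 3) := by
      rw [eq_div_iff hpos3]
      linear_combination rec3 l
    rw [hdd]
    have h0 : ds l ≠ 0 := (pos l).ne'
    have h1 : ds (l + 1) ≠ 0 := (pos (l + 1)).ne'
    field_simp
  have hl3 : Filter.Tendsto (fun l : ℕ => (3:ℝ) / ((l:ℝ) + 3)) Filter.atTop (nhds 0) := by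
    apply Filter.Tendsto.div_atTop tendsto_const_nhds
    exact Filter.tendsto_atTop_add_const_right _ 3 tendsto_natCast_atTop_atTop
  have hq1 : Filter.Tendsto (fun l : ℕ => (2 * (l:ℝ) + 3) / ((l:ℝ) + 3))
      Filter.atTop (nhds 2) := by
    have he : ∀ l : ℕ, (2 * (l:ℝ) + 3) / ((l:ℝ) + 3) = 2 - 3 / ((l:ℝ) + 3) := by
      intro l
      have hpos3 : ((l:ℝ) + 3) ≠ 0 := by positivity
      rw [eq_sub_iff_add_eq, ← add_div, div_eq_iff hpos3]
      ring
    simp only [he]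
    have := (tendsto_const_nhds (x := (2:ℝ)) (f := Filter.atTop (α := ℕ))).sub hl3
    simpa using this
  have hq2 : Filter.Tendsto (fun l : ℕ => ((l:ℝ) / ((l:ℝ) + 3))) Filter.atTop (nhds 1) := by
    have he : ∀ l : ℕ, ((l:ℝ) / ((l:ℝ) + 3)) = 1 - 3 / ((l:ℝ) + 3) := by
      intro l
      have hpos3 : ((l:ℝ) + 3) ≠ 0 := by positivity
      rw [eq_sub_iff_add_eq, ← add_div, div_self hpos3]
    simp only [he]
    have := (tendsto_const_nhds (x := (1:ℝ)) (f := Filter.atTop (α := ℕ))).sub hl3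
    simpa using this
  have hinv : Filter.Tendsto (fun l : ℕ => ds l / ds (l + 1)) Filter.atTop (nhds A⁻¹) := by
    have h0 := htend.inv₀ hApos.ne'
    apply h0.congr
    intro l
    rw [hρdef l, inv_div]
  have hRHS : Filter.Tendsto
      (fun l : ℕ => m * ((2 * (l:ℝ) + 3) / ((l:ℝ) + 3))
        - K ^ 2 * (((l:ℝ) / ((l:ℝ) + 3)) * (ds l / ds (l + 1))))
      Filter.atTop (nhds (m * 2 - K ^ 2 * (1 * A⁻¹))) :=
    (hq1.const_mul m).sub ((hq2.mul hinv).const_mul (K ^ 2))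
  have hLHS : Filter.Tendsto (fun l : ℕ => ds (l + 2) / ds (l + 1))
      Filter.atTop (nhds A) := by
    have h0 := htend.comp (Filter.tendsto_add_atTop_nat 1)
    apply h0.congr
    intro l
    simp [Function.comp_apply, hρdef]
  have hAeq : A = m * 2 - K ^ 2 * (1 * A⁻¹) := by
    apply tendsto_nhds_unique hLHS
    apply hRHS.congr
    intro l
    exact (hρrec l).symm
  have hquad : A ^ 2 - 2 * m * A + K ^ 2 = 0 := by
    have e1 : A ^ 2 = (m * 2 - K ^ 2 * (1 * A⁻¹)) * A := by rw [← hAeq]; ring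
    have e2 : (m * 2 - K ^ 2 * (1 * A⁻¹)) * A = 2 * m * A - K ^ 2 := by
      rw [sub_mul, one_mul, mul_assoc (K ^ 2) A⁻¹ A, inv_mul_cancel₀ hApos.ne']
      ring
    linear_combination e1 + e2
  have hAeqL : A = L := by
    have hfact : (A - (m + s)) * (A - (m - s)) = 0 := by
      linear_combination hquad - hs2
    rcases mul_eq_zero.mp hfact with h | h
    · rw [hL]; linarith [sub_eq_zero.mp h]
    · exfalso
      have := sub_eq_zero.mp h
      linarith [hAm, hspos]
  rw [hr2L, ← hAeqL]
  exact htend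
end

section
/- The sequence d_l^{1/l} converges as l → ∞, and its limit equals 1/r_2; equivalently, the power series ∑_{l≥0} d_l z^l has radius of convergence r_2. -/
open Finset Filter Topology

private lemma pairsum14 (a : ℕ → ℝ) (N : ℕ) :
    ∑ l ∈ Finset.range N, ∑ i ∈ Finset.range (l+1), a i * a (l - i)
      = ∑ p ∈ (Finset.range N ×ˢ Finset.range N).filter (fun p => p.1 + p.2 < N),
          a p.1 * a p.2 := by
  rw [Finset.sum_sigma']
  apply Finset.sum_nbij' (i := fun x => (x.2, x.1 - x.2)) (j := fun p => ⟨p.1 + p.2, p.1⟩)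
  · rintro ⟨l, i⟩ h
    simp only [Finset.mem_sigma, Finset.mem_range] at h
    simp only [Finset.mem_filter, Finset.mem_product, Finset.mem_range]
    omega
  · rintro ⟨p1, p2⟩ h
    simp only [Finset.mem_filter, Finset.mem_product, Finset.mem_range] at h
    simp only [Finset.mem_sigma, Finset.mem_range]
    omega
  · rintro ⟨l, i⟩ h
    simp only [Finset.mem_sigma, Finset.mem_range] at h
    have hli : i + (l - i) = l := by omega
    simp only [Sigma.mk.inj_iff, hli]
  · rintro ⟨p1, p2⟩ h
    simp only [Finset.mem_filter, Finset.mem_product, Finset.mem_range] at h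
    simp only [Prod.mk.injEq]
    constructor
    · trivial
    · show p1 + p2 - p1 = p2
      omega
  · rintro ⟨l, i⟩ h
    rfl

private lemma pairprod14 (a : ℕ → ℝ) (s t : Finset ℕ) :
    ∑ p ∈ s ×ˢ t, a p.1 * a p.2 = (∑ i ∈ s, a i) * (∑ j ∈ t, a j) := by
  rw [Finset.sum_mul_sum, Finset.sum_product]

private lemma pairsum_le14 (a : ℕ → ℝ) (ha : ∀ i, 0 ≤ a i) (N : ℕ) :
    ∑ l ∈ Finset.range N, ∑ i ∈ Finset.range (l+1), a i * a (l - i)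
      ≤ (∑ i ∈ Finset.range N, a i) ^ 2 := by
  rw [pairsum14, sq, ← pairprod14]
  apply Finset.sum_le_sum_of_subset_of_nonneg (Finset.filter_subset _ _)
  intro p _ _
  exact mul_nonneg (ha _) (ha _)

private lemma pairsum_ge14 (a : ℕ → ℝ) (ha : ∀ i, 0 ≤ a i) (M N : ℕ) (hMN : 2 * M ≤ N + 1) :
    (∑ i ∈ Finset.range M, a i) ^ 2
      ≤ ∑ l ∈ Finset.range N, ∑ i ∈ Finset.range (l+1), a i * a (l - i) := by
  rw [pairsum14, sq, ← pairprod14]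
  apply Finset.sum_le_sum_of_subset_of_nonneg
  · intro p hp
    simp only [Finset.mem_product, Finset.mem_range] at hp
    simp only [Finset.mem_filter, Finset.mem_product, Finset.mem_range]
    omega
  · intro p _ _
    exact mul_nonneg (ha _) (ha _)

private lemma summable_of_ev_le_geo14 {f : ℕ → ℝ} (hf : ∀ l, 0 ≤ f l) {q : ℝ}
    (hq0 : 0 ≤ q) (hq1 : q < 1) (h : ∀ᶠ l in Filter.atTop, f l ≤ q ^ l) : Summable f := by
  obtain ⟨N, hN⟩ := Filter.eventually_atTop.mp h
  rw [← summable_nat_add_iff N]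
  have hgeo : Summable (fun l : ℕ => q ^ N * q ^ l) :=
    (summable_geometric_of_lt_one hq0 hq1).mul_left _
  have hgeo' : Summable (fun l : ℕ => q ^ (l + N)) :=
    hgeo.congr fun l => by rw [← pow_add]; ring_nf
  exact Summable.of_nonneg_of_le (fun l => hf _) (fun l => hN (l + N) (by omega)) hgeo'

set_option maxHeartbeats 1000000 in
/-- `d_l^{1/l} → 1/r₂`; equivalently the power series `∑ d_l z^l` has radius of
convergence `r₂` (it converges for `|z| < r₂` and diverges for `|z| > r₂`). -/
theorem stmt_14 (b k n : ℕ) (hb : 0 < b) (hk : 0 < k) (hn : 0 < n)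
    (ds : ℕ → ℝ) (hds0 : ds 0 = n)
    (hdsrec : ∀ l : ℕ, ds (l + 1)
      = k * ds l + b * ∑ i ∈ Finset.range (l + 1), ds i * ds (l - i))
    (r2 : ℝ)
    (hr2 : r2 = ((k : ℝ) + 2 * b * n - 2 * Real.sqrt (b * n * k + b ^ 2 * n ^ 2)) / k ^ 2) :
    Filter.Tendsto (fun l : ℕ => ds l ^ (1 / (l : ℝ))) Filter.atTop (nhds (1 / r2)) ∧
    (∀ z : ℝ, |z| < r2 → Summable (fun l : ℕ => ds l * z ^ l)) ∧
    (∀ z : ℝ, r2 < |z| → ¬ Summable (fun l : ℕ => ds l * z ^ l)) := by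
  have hbR : (0:ℝ) < b := by exact_mod_cast hb
  have hkR : (0:ℝ) < k := by exact_mod_cast hk
  have hnR : (0:ℝ) < n := by exact_mod_cast hn
  -- positivity of the sequence
  have hds_pos : ∀ l, 0 < ds l := by
    intro l
    induction l using Nat.strong_induction_on with
    | _ l ih =>
      match l with
      | 0 => rw [hds0]; exact hnR
      | Nat.succ m =>
        rw [hdsrec m]
        have h1 : 0 < (k:ℝ) * ds m := mul_pos hkR (ih m (Nat.lt_succ_self m))
        have h2 : 0 ≤ ∑ i ∈ Finset.range (m+1), ds i * ds (m - i) := by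
          apply Finset.sum_nonneg
          intro i hi
          have hi' : i < m + 1 := Finset.mem_range.mp hi
          exact mul_nonneg (ih i (by omega)).le (ih (m - i) (by omega)).le
        nlinarith
  -- square root facts
  set sq2 : ℝ := Real.sqrt ((b:ℝ) * n * k + (b:ℝ) ^ 2 * n ^ 2) with hsqdef
  have hXpos : (0:ℝ) < (b:ℝ) * n * k + (b:ℝ) ^ 2 * n ^ 2 := by positivity
  have hsq0 : 0 < sq2 := Real.sqrt_pos.mpr hXpos
  have hsq2 : sq2 ^ 2 = (b:ℝ) * n * k + (b:ℝ) ^ 2 * n ^ 2 := Real.sq_sqrt hXpos.le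
  have hpos' : (0:ℝ) < (k:ℝ) + 2 * b * n + 2 * sq2 := by positivity
  have hnum : (0:ℝ) < (k:ℝ) + 2 * b * n - 2 * sq2 := by nlinarith [hsq2, hpos']
  have hr2pos : 0 < r2 := by rw [hr2]; push_cast; positivity
  have hk2r2 : (k:ℝ)^2 * r2 = (k:ℝ) + 2 * b * n - 2 * sq2 := by
    rw [hr2]; push_cast; field_simp
  have hkr2 : (k:ℝ) * r2 < 1 := by
    have hbn : (b:ℝ) * n < sq2 := by nlinarith [hsq2, hsq0]
    have : (k:ℝ)^2 * r2 < k := by rw [hk2r2]; nlinarith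
    nlinarith
  -- discriminant factorization
  have hdiscfac : ∀ t : ℝ, ((1 - k*t)^2 - 4*b*n*t) * k^2
      = ((k:ℝ)^2*t - ((k:ℝ) + 2*b*n - 2*sq2)) * ((k:ℝ)^2*t - ((k:ℝ) + 2*b*n + 2*sq2)) := by
    intro t
    linear_combination (4:ℝ) * hsq2
  have hdiscpos : ∀ t : ℝ, 0 ≤ t → t < r2 → 4*(b:ℝ)*n*t < (1 - k*t)^2 := by
    intro t ht0 htr
    have h1 : (k:ℝ)^2*t - ((k:ℝ) + 2*b*n - 2*sq2) < 0 := by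
      rw [← hk2r2]; nlinarith [sq_nonneg (k:ℝ)]
    have h2 : (k:ℝ)^2*t - ((k:ℝ) + 2*b*n + 2*sq2) < 0 := by nlinarith
    have h3 : 0 < ((1 - k*t)^2 - 4*b*n*t) * k^2 :=
      (hdiscfac t) ▸ mul_pos_of_neg_of_neg h1 h2
    have hk2 : (0:ℝ) < (k:ℝ)^2 := by positivity
    nlinarith [h3, hk2]
  have hdiscneg : ∀ t : ℝ, r2 < t → (k:ℝ)*t < 1 → (1 - k*t)^2 < 4*(b:ℝ)*n*t := by
    intro t htr hkt
    have h1 : 0 < (k:ℝ)^2*t - ((k:ℝ) + 2*b*n - 2*sq2) := by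
      rw [← hk2r2]; nlinarith [sq_nonneg (k:ℝ)]
    have h2 : (k:ℝ)^2*t - ((k:ℝ) + 2*b*n + 2*sq2) < 0 := by nlinarith
    have h3 : ((1 - k*t)^2 - 4*b*n*t) * k^2 < 0 :=
      (hdiscfac t) ▸ mul_neg_of_pos_of_neg h1 h2
    have hk2 : (0:ℝ) < (k:ℝ)^2 := by positivity
    nlinarith [h3, hk2]
  -- partial sum recurrence
  have hT : ∀ (t : ℝ) (N : ℕ), ∑ l ∈ Finset.range (N+1), ds l * t^l
      = n + k*t*(∑ l ∈ Finset.range N, ds l * t^l)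
        + b*t*(∑ i ∈ Finset.range N, ∑ j ∈ Finset.range (i+1),
            (ds j * t^j) * (ds (i-j) * t^(i-j))) := by
    intro t N
    have inner : ∀ i : ℕ, (∑ j ∈ Finset.range (i+1), ds j * ds (i - j)) * t^i
        = ∑ j ∈ Finset.range (i+1), (ds j * t^j) * (ds (i-j) * t^(i-j)) := by
      intro i
      rw [Finset.sum_mul]
      apply Finset.sum_congr rfl
      intro j hj
      have hji : j ≤ i := Nat.lt_succ_iff.mp (Finset.mem_range.mp hj)
      have : t^i = t^j * t^(i-j) := by rw [← pow_add]; congr 1; omega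
      rw [this]; ring
    rw [Finset.sum_range_succ']
    have hstep : ∀ i ∈ Finset.range N, ds (i+1) * t^(i+1)
        = k*t*(ds i * t^i) + b*t*(∑ j ∈ Finset.range (i+1),
            (ds j * t^j) * (ds (i-j) * t^(i-j))) := by
      intro i _
      rw [hdsrec i, ← inner i]
      ring
    rw [Finset.sum_congr rfl hstep, Finset.sum_add_distrib, ← Finset.mul_sum, ← Finset.mul_sum,
      hds0]
    ring
  -- summability below r2
  have key_sum : ∀ t : ℝ, 0 ≤ t → t < r2 → Summable (fun l : ℕ => ds l * t ^ l) := by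
    intro t ht0 htr
    rcases eq_or_lt_of_le ht0 with h0 | ht0'
    · apply summable_of_ne_finset_zero (s := {0})
      intro l hl
      have hl0 : l ≠ 0 := by simpa using hl
      rw [← h0, zero_pow hl0, mul_zero]
    · have hkt : (k:ℝ)*t < 1 := by nlinarith
      have hc0 : 0 < 1 - (k:ℝ)*t := by linarith
      have hdp := hdiscpos t ht0 htr
      set D : ℝ := Real.sqrt ((1 - k*t)^2 - 4*b*n*t) with hDdef
      have hD0 : 0 ≤ D := Real.sqrt_nonneg _
      have hD2 : D^2 = (1 - k*t)^2 - 4*b*n*t := Real.sq_sqrt (by nlinarith)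
      have hDlt : D < 1 - k*t := by nlinarith [hD2, mul_pos (mul_pos hbR hnR) ht0', hD0, hc0]
      set S : ℝ := (1 - k*t - D)/(2*b*t) with hSdef
      have hS0 : 0 < S := by apply div_pos; linarith; positivity
      have hSmul : 2*(b:ℝ)*t*S = 1 - k*t - D := by
        rw [hSdef]; field_simp
      have hD' : D = 1 - k*t - 2*b*t*S := by linarith
      have hD2' : (1 - k*t - 2*b*t*S)^2 = (1 - k*t)^2 - 4*b*n*t := by rw [← hD']; exact hD2
      have h4 : (4*(b:ℝ)*t) * (b*t*S^2 + (k*t-1)*S + n) = (4*(b:ℝ)*t) * 0 := by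
        rw [mul_zero]; linear_combination hD2'
      have h0 : (b:ℝ)*t*S^2 + (k*t-1)*S + n = 0 :=
        mul_left_cancel₀ (by positivity) h4
      have hfix : (n:ℝ) + k*t*S + b*t*S^2 = S := by linarith
      have hktS : (0:ℝ) ≤ k*t*S := by positivity
      have hbtS : (0:ℝ) ≤ b*t*S^2 := by positivity
      have hnS : (n:ℝ) ≤ S := by linarith
      have hbnd : ∀ N : ℕ, ∑ l ∈ Finset.range (N+1), ds l * t^l ≤ S := by
        intro N
        induction N with
        | zero => simp [hds0]; linarith
        | succ N ih =>
          rw [hT t (N+1)]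
          set T := ∑ l ∈ Finset.range (N+1), ds l * t^l with hTdef
          have hTnn : 0 ≤ T := Finset.sum_nonneg fun l _ =>
            mul_nonneg (hds_pos l).le (pow_nonneg ht0 l)
          have hQ : ∑ i ∈ Finset.range (N+1), ∑ j ∈ Finset.range (i+1),
              (ds j * t^j) * (ds (i-j) * t^(i-j)) ≤ T^2 := by
            have := pairsum_le14 (fun l => ds l * t^l)
              (fun l => mul_nonneg (hds_pos l).le (pow_nonneg ht0 l)) (N+1)
            simpa using this
          have hbt : (0:ℝ) ≤ b*t := by positivity
          have hkt' : (0:ℝ) ≤ k*t := by positivity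
          have e1 : (b:ℝ)*t*(∑ i ∈ Finset.range (N+1), ∑ j ∈ Finset.range (i+1),
              (ds j * t^j) * (ds (i-j) * t^(i-j))) ≤ b*t*T^2 :=
            mul_le_mul_of_nonneg_left hQ hbt
          have e2 : (k:ℝ)*t*T ≤ k*t*S := mul_le_mul_of_nonneg_left ih hkt'
          have e3 : T^2 ≤ S^2 := pow_le_pow_left₀ hTnn ih 2
          have e4 : (b:ℝ)*t*T^2 ≤ b*t*S^2 := mul_le_mul_of_nonneg_left e3 hbt
          linarith
      apply summable_of_sum_range_le (c := S)
        (fun l => mul_nonneg (hds_pos l).le (pow_nonneg ht0 l))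
      intro N
      cases N with
      | zero => simpa using hS0.le
      | succ N => exact hbnd N
  -- divergence above r2
  have key_div : ∀ t : ℝ, r2 < t → ¬ Summable (fun l : ℕ => ds l * t ^ l) := by
    intro t htr hsum
    have ht0 : 0 < t := hr2pos.trans htr
    have ha0 : ∀ l, 0 ≤ ds l * t^l := fun l =>
      mul_nonneg (hds_pos l).le (pow_nonneg ht0.le l)
    set s := ∑' l, ds l * t^l with hsdef
    have hs0 : (n:ℝ) ≤ s := by
      have := Summable.le_tsum hsum 0 (fun i _ => ha0 i)
      simpa [hds0] using this
    have hTle : ∀ N, ∑ l ∈ Finset.range N, ds l * t^l ≤ s := fun N =>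
      Summable.sum_le_tsum (Finset.range N) (fun i _ => ha0 i) hsum
    have hTlim : Filter.Tendsto (fun N => ∑ l ∈ Finset.range N, ds l * t^l)
        Filter.atTop (𝓝 s) := hsum.hasSum.tendsto_sum_nat
    have hkey : ∀ M : ℕ, (n:ℝ) + k*t*(∑ l ∈ Finset.range (2*M+1), ds l * t^l)
        + b*t*(∑ l ∈ Finset.range M, ds l * t^l)^2 ≤ s := by
      intro M
      have h1 := hT t (2*M+1)
      have hQ : (∑ l ∈ Finset.range M, ds l * t^l)^2
          ≤ ∑ i ∈ Finset.range (2*M+1), ∑ j ∈ Finset.range (i+1),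
              (ds j * t^j) * (ds (i-j) * t^(i-j)) := by
        have := pairsum_ge14 (fun l => ds l * t^l) (fun l => ha0 l) M (2*M+1) (Nat.le_add_right (2*M) 2)
        simpa using this
      have hbt : (0:ℝ) ≤ b*t := by positivity
      have h2 : (n:ℝ) + k*t*(∑ l ∈ Finset.range (2*M+1), ds l * t^l)
          + b*t*(∑ l ∈ Finset.range M, ds l * t^l)^2
          ≤ ∑ l ∈ Finset.range (2*M+2), ds l * t^l := by
        rw [h1]
        have := mul_le_mul_of_nonneg_left hQ hbt
        linarith
      exact h2.trans (hTle _)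
    have h2M : Filter.Tendsto (fun M : ℕ => 2*M+1) Filter.atTop Filter.atTop :=
      by
        apply Filter.tendsto_atTop_atTop_of_monotone
        · intro a b hab; dsimp only; omega
        · intro x; exact ⟨x, by omega⟩
    have hlim2 : Filter.Tendsto (fun M : ℕ => (n:ℝ)
        + k*t*(∑ l ∈ Finset.range (2*M+1), ds l * t^l)
        + b*t*(∑ l ∈ Finset.range M, ds l * t^l)^2)
        Filter.atTop (𝓝 ((n:ℝ) + k*t*s + b*t*s^2)) := by
      exact (tendsto_const_nhds.add (tendsto_const_nhds.mul (hTlim.comp h2M))).add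
        (tendsto_const_nhds.mul (hTlim.pow 2))
    have hineq : (n:ℝ) + k*t*s + b*t*s^2 ≤ s :=
      le_of_tendsto hlim2 (Filter.Eventually.of_forall hkey)
    have hspos : (0:ℝ) < s := lt_of_lt_of_le hnR hs0
    rcases le_or_gt 1 ((k:ℝ)*t) with hkt | hkt
    · have h1 : 0 ≤ ((k:ℝ)*t - 1) * s := mul_nonneg (by linarith) hspos.le
      have h2 : (0:ℝ) < b*t*s^2 := by positivity
      nlinarith
    · have hdn := hdiscneg t htr hkt
      have e : 4*(b:ℝ)*t*((n:ℝ) + k*t*s + b*t*s^2 - s)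
          = (2*b*t*s - (1-k*t))^2 - (1-k*t)^2 + 4*b*n*t := by ring
      have e1 : 4*(b:ℝ)*t*((n:ℝ) + k*t*s + b*t*s^2 - s) ≤ 0 :=
        mul_nonpos_of_nonneg_of_nonpos (by positivity) (by linarith)
      rw [e] at e1
      linarith [sq_nonneg (2*b*t*s - (1-k*t))]
  -- Fekete / subadditivity
  set u : ℕ → ℝ := fun m => if m = 0 then 0 else -Real.log (b * ds (m-1)) with hudef
  have hbds_pos : ∀ l, 0 < (b:ℝ) * ds l := fun l => mul_pos hbR (hds_pos l)
  have hsupmul : ∀ m n' : ℕ, ((b:ℝ) * ds m) * ((b:ℝ) * ds n') ≤ (b:ℝ) * ds (m + n' + 1) := by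
    intro m n'
    have hmem : m ∈ Finset.range (m + n' + 1) := Finset.mem_range.mpr (by omega)
    have hsingle : ds m * ds (m + n' - m) ≤ ∑ i ∈ Finset.range (m + n' + 1), ds i * ds (m + n' - i) :=
      Finset.single_le_sum (f := fun i => ds i * ds (m + n' - i))
        (fun i hi => mul_nonneg (hds_pos i).le (hds_pos _).le) hmem
    have hmn : m + n' - m = n' := by omega
    rw [hmn] at hsingle
    have := hdsrec (m + n')
    have hkd : 0 ≤ (k:ℝ) * ds (m + n') := (mul_pos hkR (hds_pos _)).le
    nlinarith [mul_le_mul_of_nonneg_left hsingle hbR.le]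
  have hsub : Subadditive u := by
    intro m n'
    match m, n' with
    | 0, n' => simp [hudef]
    | (m+1), 0 => simp [hudef]
    | (m+1), (n'+1) =>
      have hne1 : m + 1 + (n' + 1) ≠ 0 := by omega
      simp only [hudef, if_neg hne1, if_neg (Nat.succ_ne_zero m), if_neg (Nat.succ_ne_zero n')]
      have h1 : m + 1 + (n' + 1) - 1 = m + n' + 1 := by omega
      rw [h1]
      simp only [Nat.add_sub_cancel]
      have hlog : Real.log ((b * ds m) * (b * ds n')) ≤ Real.log (b * ds (m + n' + 1)) :=
        Real.log_le_log (mul_pos (hbds_pos m) (hbds_pos n')) (hsupmul m n')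
      rw [Real.log_mul (hbds_pos m).ne' (hbds_pos n').ne'] at hlog
      linarith
  -- bounded below
  have t0pos : 0 < r2/2 := by linarith
  have hsum0 := key_sum (r2/2) t0pos.le (by linarith)
  set C := ∑' l, ds l * (r2/2)^l with hCdef
  have hdsle : ∀ l, ds l * (r2/2)^l ≤ C := fun l =>
    Summable.le_tsum hsum0 l (fun i _ => mul_nonneg (hds_pos i).le (pow_nonneg t0pos.le i))
  have hCpos : 0 < C := by
    have h00 : (0:ℝ) < ds 0 * (r2/2)^0 := by
      rw [pow_zero, mul_one]; exact hds_pos 0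
    exact h00.trans_le (hdsle 0)
  have hdsle' : ∀ l, ds l ≤ C * (2/r2)^l := by
    intro l
    have h2 : (0:ℝ) < (r2/2)^l := pow_pos t0pos l
    have h3 : ds l ≤ C / (r2/2)^l := (le_div_iff₀ h2).mpr (hdsle l)
    have h4 : C / (r2/2)^l = C * (2/r2)^l := by
      rw [div_eq_mul_inv, ← inv_pow, inv_div]
    rwa [h4] at h3
  have hlogbound : ∀ l : ℕ, Real.log ((b:ℝ) * ds l)
      ≤ Real.log ((b:ℝ)*C) + l * Real.log (2/r2) := by
    intro l
    have h2r : (0:ℝ) < 2/r2 := by positivity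
    have hle : (b:ℝ) * ds l ≤ (b:ℝ)*C*(2/r2)^l := by
      have := hdsle' l
      nlinarith [pow_pos h2r l]
    have := Real.log_le_log (hbds_pos l) hle
    rwa [Real.log_mul (mul_pos hbR hCpos).ne' (pow_pos h2r l).ne', Real.log_pow] at this
  have hbdd : BddBelow (Set.range fun m : ℕ => u m / m) := by
    set A1 := max 0 (Real.log ((b:ℝ)*C)) with hA1
    set B1 := max 0 (Real.log (2/r2)) with hB1
    refine ⟨-(A1 + B1), ?_⟩
    rintro x ⟨m, rfl⟩
    match m with
    | 0 =>
      simp only [hudef, if_pos rfl, Nat.cast_zero, zero_div]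
      have : 0 ≤ A1 + B1 := add_nonneg (le_max_left _ _) (le_max_left _ _)
      linarith
    | (l+1) =>
      simp only [hudef, if_neg (Nat.succ_ne_zero l), Nat.add_sub_cancel]
      have hm : (0:ℝ) < (l:ℝ) + 1 := by positivity
      rw [Nat.cast_add, Nat.cast_one, neg_div, neg_le, neg_neg]
      rw [div_le_iff₀ hm]
      have h1 := hlogbound l
      have h2 : Real.log ((b:ℝ)*C) ≤ A1 := le_max_right _ _
      have h3 : Real.log (2/r2) ≤ B1 := le_max_right _ _
      have h4 : (0:ℝ) ≤ A1 := le_max_left _ _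
      have h5 : (0:ℝ) ≤ B1 := le_max_left _ _
      have h6 : (0:ℝ) ≤ l := Nat.cast_nonneg l
      nlinarith
  set L := hsub.lim with hLdef
  have hUlim : Filter.Tendsto (fun m : ℕ => u m / m) Filter.atTop (𝓝 L) :=
    hsub.tendsto_lim hbdd
  -- log ds l / l → -L
  have hvlim : Filter.Tendsto (fun l : ℕ => Real.log (ds l) / l) Filter.atTop (𝓝 (-L)) := by
    have hUlim' : Filter.Tendsto (fun l : ℕ => u (l+1) / ((l:ℝ)+1)) Filter.atTop (𝓝 L) := by
      have h := hUlim.comp (Filter.tendsto_add_atTop_nat 1)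
      apply h.congr
      intro l
      simp [Function.comp]
    have hA : Filter.Tendsto (fun l : ℕ => ((l:ℝ)+1)/l) Filter.atTop (𝓝 1) := by
      have h1 : Filter.Tendsto (fun l : ℕ => 1 + 1/(l:ℝ)) Filter.atTop (𝓝 (1+0)) :=
        tendsto_const_nhds.add tendsto_one_div_atTop_nhds_zero_nat
      rw [add_zero] at h1
      apply h1.congr'
      filter_upwards [Filter.eventually_gt_atTop 0] with l hl
      have : (l:ℝ) ≠ 0 := Nat.cast_ne_zero.mpr (by omega)
      field_simp
    have hB : Filter.Tendsto (fun l : ℕ => Real.log b / l) Filter.atTop (𝓝 0) :=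
      tendsto_const_div_atTop_nhds_zero_nat _
    have hmain : Filter.Tendsto
        (fun l : ℕ => -((((l:ℝ)+1)/l) * (u (l+1)/((l:ℝ)+1))) - Real.log b / l)
        Filter.atTop (𝓝 (-(1*L) - 0)) := ((hA.mul hUlim').neg).sub hB
    rw [one_mul, sub_zero] at hmain
    apply hmain.congr'
    filter_upwards [Filter.eventually_gt_atTop 0] with l hl
    have hl0 : (l:ℝ) ≠ 0 := Nat.cast_ne_zero.mpr (by omega)
    have hl1 : (l:ℝ) + 1 ≠ 0 := by positivity
    simp only [hudef, if_neg (Nat.succ_ne_zero l), Nat.add_sub_cancel]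
    rw [Real.log_mul (by positivity) (hds_pos l).ne']
    field_simp
    ring
  have hrlim : Filter.Tendsto (fun l : ℕ => ds l ^ (1/(l:ℝ))) Filter.atTop
      (𝓝 (Real.exp (-L))) := by
    have heq : ∀ l : ℕ, ds l ^ (1/(l:ℝ)) = Real.exp (Real.log (ds l) / l) := by
      intro l
      rw [Real.rpow_def_of_pos (hds_pos l), mul_one_div]
    have := (Real.continuous_exp.tendsto (-L)).comp hvlim
    apply this.congr
    intro l
    exact (heq l).symm
  set A := Real.exp (-L) with hAdef
  have hApos : 0 < A := Real.exp_pos _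
  -- A ≤ 1/t for every 0 < t < r2
  have hA_le : ∀ t : ℝ, 0 < t → t < r2 → A ≤ 1/t := by
    intro t ht0 htr
    have hsum := key_sum t ht0.le htr
    have hten : Filter.Tendsto (fun l : ℕ => ds l * t^l) Filter.atTop (𝓝 0) :=
      hsum.tendsto_atTop_zero
    have hev : ∀ᶠ l : ℕ in Filter.atTop, ds l * t^l < 1 :=
      hten.eventually_lt_const (by norm_num)
    apply le_of_tendsto hrlim
    filter_upwards [hev, Filter.eventually_gt_atTop 0] with l h1 hl
    have hl0 : (l:ℝ) ≠ 0 := Nat.cast_ne_zero.mpr (by omega)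
    have htl : (0:ℝ) < t^l := pow_pos ht0 l
    have hds_le : ds l ≤ (1/t)^l := by
      rw [one_div, inv_pow, ← one_div]
      exact (le_div_iff₀ htl).mpr (by linarith)
    have h2 : ds l ^ (1/(l:ℝ)) ≤ ((1/t)^l) ^ (1/(l:ℝ)) :=
      Real.rpow_le_rpow (hds_pos l).le hds_le (by positivity)
    have h3 : ((1/t)^l : ℝ) ^ (1/(l:ℝ)) = 1/t := by
      rw [← Real.rpow_natCast (1/t) l, ← Real.rpow_mul (by positivity),
        mul_one_div_cancel hl0, Real.rpow_one]
    rw [h3] at h2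
    exact h2
  have hA_le_r2 : A ≤ 1/r2 := by
    by_contra hcon
    push_neg at hcon
    have h1 : 1/A < r2 := by
      rw [div_lt_iff₀ hApos]
      rw [div_lt_iff₀ hr2pos] at hcon
      linarith
    set t := (1/A + r2)/2 with htdef
    have ht1 : 1/A < t := by rw [htdef]; linarith
    have ht2 : t < r2 := by rw [htdef]; linarith
    have ht0 : 0 < t := lt_trans (by positivity) ht1
    have h2 : 1/t < A := by
      rw [div_lt_iff₀ ht0]
      have := (div_lt_iff₀ hApos).mp ht1
      linarith
    linarith [hA_le t ht0 ht2]
  have hA_ge_r2 : 1/r2 ≤ A := by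
    by_contra hcon
    push_neg at hcon
    have h1 : r2 < 1/A := by
      rw [lt_div_iff₀ hApos]
      have := (lt_div_iff₀ hr2pos).mp hcon
      linarith
    set t := (r2 + 1/A)/2 with htdef
    have ht1 : r2 < t := by rw [htdef]; linarith
    have ht2 : t < 1/A := by rw [htdef]; linarith
    have ht0 : 0 < t := hr2pos.trans ht1
    have hAt : A < 1/t := by
      rw [lt_div_iff₀ ht0]
      have := (lt_div_iff₀ hApos).mp ht2
      linarith
    set c := (A + 1/t)/2 with hcdef
    have hc1 : A < c := by rw [hcdef]; linarith
    have hc2 : c < 1/t := by rw [hcdef]; linarith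
    have hc0 : 0 < c := hApos.trans hc1
    have hct : c * t < 1 := by
      have := (lt_div_iff₀ ht0).mp hc2
      linarith
    have hev : ∀ᶠ l : ℕ in Filter.atTop, ds l ^ (1/(l:ℝ)) < c :=
      hrlim.eventually_lt_const hc1
    have hsum : Summable (fun l : ℕ => ds l * t^l) := by
      apply summable_of_ev_le_geo14
        (fun l => mul_nonneg (hds_pos l).le (pow_nonneg ht0.le l))
        (q := c*t) (by positivity) hct
      filter_upwards [hev, Filter.eventually_gt_atTop 0] with l h1 hl
      have hl0 : (l:ℝ) ≠ 0 := Nat.cast_ne_zero.mpr (by omega)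
      have hdl : ds l ≤ c^l := by
        have h2 : (ds l ^ (1/(l:ℝ)))^(l:ℕ) = ds l := by
          rw [← Real.rpow_natCast (ds l ^ (1/(l:ℝ))) l, ← Real.rpow_mul (hds_pos l).le,
            one_div_mul_cancel hl0, Real.rpow_one]
        calc ds l = (ds l ^ (1/(l:ℝ)))^(l:ℕ) := h2.symm
          _ ≤ c^l := pow_le_pow_left₀ (Real.rpow_nonneg (hds_pos l).le _) h1.le l
      calc ds l * t^l ≤ c^l * t^l :=
            mul_le_mul_of_nonneg_right hdl (pow_nonneg ht0.le l)
        _ = (c*t)^l := (mul_pow c t l).symm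
    exact key_div t ht1 hsum
  have hAr2 : A = 1/r2 := le_antisymm hA_le_r2 hA_ge_r2
  refine ⟨?_, ?_, ?_⟩
  · exact hAr2 ▸ hrlim
  · intro z hz
    have h1 := key_sum |z| (abs_nonneg z) hz
    have h2 : Summable (fun l : ℕ => |ds l * z^l|) := by
      apply h1.congr
      intro l
      rw [abs_mul, abs_pow, abs_of_pos (hds_pos l)]
    exact h2.of_abs
  · intro z hz hsum
    have hz0 : 0 < |z| := hr2pos.trans hz
    set t := (r2 + |z|)/2 with htdef
    have ht1 : r2 < t := by rw [htdef]; linarith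
    have ht2 : t < |z| := by rw [htdef]; linarith
    have ht0 : 0 < t := hr2pos.trans ht1
    have hten : Filter.Tendsto (fun l : ℕ => |ds l * z^l|) Filter.atTop (𝓝 0) := by
      have := hsum.tendsto_atTop_zero.abs
      simpa using this
    have hev : ∀ᶠ l : ℕ in Filter.atTop, |ds l * z^l| < 1 :=
      hten.eventually_lt_const (by norm_num)
    apply key_div t ht1
    apply summable_of_ev_le_geo14
      (fun l => mul_nonneg (hds_pos l).le (pow_nonneg ht0.le l))
      (q := t/|z|) (by positivity) ((div_lt_one hz0).mpr ht2)
    filter_upwards [hev] with l h1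
    have habs : |ds l * z^l| = ds l * |z|^l := by
      rw [abs_mul, abs_pow, abs_of_pos (hds_pos l)]
    rw [habs] at h1
    have hzl : (0:ℝ) < |z|^l := pow_pos hz0 l
    have h2 : ds l ≤ 1/|z|^l := (le_div_iff₀ hzl).mpr h1.le
    calc ds l * t^l ≤ (1/|z|^l) * t^l :=
          mul_le_mul_of_nonneg_right h2 (pow_nonneg ht0.le l)
      _ = (t/|z|)^l := by rw [div_pow, one_div, inv_mul_eq_div, htdef, div_pow, div_pow]
end

section
/- Let D(X) = ∑_{l≥0} d_l X^l be the formal power series over ℝ whose coefficients are the sequence (d_l). Then (1 − k·X − 2b·X·D(X))² = k²·X² − (2k + 4bn)·X + 1 in the ring of formal power series ℝ⟦X⟧. -/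
open PowerSeries

/-- In `ℝ⟦X⟧`, `(1 − kX − 2bX·D(X))² = k²X² − (2k+4bn)X + 1`. -/
theorem stmt_17 (b k n : ℕ) (hb : 0 < b) (hk : 0 < k) (hn : 0 < n)
    (ds : ℕ → ℝ) (hds0 : ds 0 = n)
    (hdsrec : ∀ l : ℕ, ds (l + 1)
      = k * ds l + b * ∑ i ∈ Finset.range (l + 1), ds i * ds (l - i)) :
    (1 - PowerSeries.C (k : ℝ) * PowerSeries.X
        - PowerSeries.C (2 * (b : ℝ)) * PowerSeries.X * PowerSeries.mk ds) ^ 2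
      = PowerSeries.C ((k : ℝ) ^ 2) * PowerSeries.X ^ 2
        - PowerSeries.C (2 * (k : ℝ) + 4 * b * n) * PowerSeries.X + 1 := by
  set D := PowerSeries.mk ds with hD
  have key : D = C (n : ℝ) + C (k : ℝ) * (X * D) + C (b : ℝ) * (X * (D * D)) := by
    ext l
    cases l with
    | zero =>
      simp [hD, hds0, PowerSeries.coeff_zero_eq_constantCoeff]
    | succ l =>
      rw [map_add, map_add, PowerSeries.coeff_C_mul, PowerSeries.coeff_C_mul,
        PowerSeries.coeff_succ_X_mul, PowerSeries.coeff_succ_X_mul,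
        PowerSeries.coeff_mul, Finset.Nat.sum_antidiagonal_eq_sum_range_succ_mk]
      simp only [hD, PowerSeries.coeff_mk, PowerSeries.coeff_C, Nat.succ_ne_zero, if_false,
        add_zero, zero_add]
      simpa using hdsrec l
  have h2 : C (2 * (b : ℝ)) = 2 * C (b : ℝ) := by
    rw [map_mul, map_ofNat]
  have h3 : C ((k : ℝ) ^ 2) = C (k : ℝ) ^ 2 := by rw [map_pow]
  have h4 : C (2 * (k : ℝ) + 4 * b * n)
      = 2 * C (k : ℝ) + 4 * (C (b : ℝ) * C (n : ℝ)) := by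
    rw [map_add, map_mul, map_mul, map_mul, map_ofNat, map_ofNat]; ring
  rw [h2, h3, h4]
  linear_combination (-(4 : ℝ⟦X⟧) * C (b : ℝ) * X) * key
end
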